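/- arXiv:2106.08652 — 7 statements merged into one kernel-verified Lean document; each statement's English description precedes it below -/
import Mathlib

section
/- For every nonempty finite set of solutions 𝒮, nonempty finite set of individuals 𝒰, and satisfaction function A : 𝒮 × 𝒰 → ℝ, there exists a maxmin-fair distribution over 𝒮, i.e., a distribution F such that scov(F) ⪰ scov(D) in the lexicographic order for every distribution D over 𝒮. -/
open Finset

/-- `v` is strictly greater than `w` in the lexicographic order. -/
def lexGT {n : ℕ} (v w : Fin n → ℝ) : Prop :=
  ∃ i, w i < v i ∧ ∀ j < i, v j = w j

/-- `v` is greater than or equal to `w` in the lexicographic order. -/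
def lexGE {n : ℕ} (v w : Fin n → ℝ) : Prop := v = w ∨ lexGT v w

/-- The vector `v` rearranged in increasing order. -/
noncomputable def sortedVec {n : ℕ} (v : Fin n → ℝ) : Fin n → ℝ :=
  v ∘ Tuple.sort v

/-- `p` is a probability distribution over `S`. -/
def IsDistrib {S : Type*} [Fintype S] (p : S → ℝ) : Prop :=
  (∀ s, 0 ≤ p s) ∧ ∑ s, p s = 1

/-- Expected satisfaction of individual `u` under the distribution `p`. -/
def expSat {S U : Type*} [Fintype S] (A : S → U → ℝ) (p : S → ℝ) (u : U) : ℝ :=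
  ∑ s, p s * A s u

/-- The vector of expected satisfactions, sorted in increasing order. -/
noncomputable def scov {S U : Type*} [Fintype S] [Fintype U] (A : S → U → ℝ) (p : S → ℝ) :
    Fin (Fintype.card U) → ℝ :=
  sortedVec (fun i => expSat A p ((Fintype.equivFin U).symm i))

/-!
A lexicographic maximum of a continuous map `f : X → (Fin n → ℝ)` on a nonempty compact set
exists: maximise the first coordinate, restrict to the set of maximisers (again nonempty and
compact) and recurse on the remaining coordinates. The sorted satisfaction vector is continuous
in the distribution, because the `i`-th smallest entry of `v` is the min-max
`min_{|T| = i+1} max_{t ∈ T} v t`, and the distributions form the compact standard simplex.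
-/

theorem lexGE_iff_toLex_le {n : ℕ} {v w : Fin n → ℝ} : lexGE v w ↔ toLex w ≤ toLex v := by
  rw [le_iff_lt_or_eq, or_comm, toLex_inj, eq_comm]
  refine or_congr Iff.rfl ⟨fun ⟨i, hlt, heq⟩ => ⟨i, fun j hj => (heq j hj).symm, hlt⟩,
    fun ⟨i, heq, hlt⟩ => ⟨i, hlt, fun j hj => (heq j hj).symm⟩⟩

theorem Fin.toLex_cons_le_toLex_cons_iff {α : Type*} [LinearOrder α] {n : ℕ} {a b : α}
    {x y : Fin n → α} :
    toLex (Fin.cons a x : Fin (n + 1) → α) ≤ toLex (Fin.cons b y) ↔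
      a < b ∨ a = b ∧ toLex x ≤ toLex y := by
  have hlt : toLex (Fin.cons a x : Fin (n + 1) → α) < toLex (Fin.cons b y) ↔
      a < b ∨ a = b ∧ toLex x < toLex y :=
    Fin.pi_lex_lt_cons_cons _
  rw [le_iff_lt_or_eq, le_iff_lt_or_eq, toLex_inj, toLex_inj, Fin.cons_inj]
  exact (or_congr_left hlt).trans (by tauto)

theorem IsCompact.exists_forall_toLex_le {X β : Type*} [TopologicalSpace X] [LinearOrder β]
    [TopologicalSpace β] [OrderClosedTopology β] {n : ℕ} {K : Set X} (hK : IsCompact K)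
    (hne : K.Nonempty) {f : X → Fin n → β} (hf : Continuous f) :
    ∃ x ∈ K, ∀ y ∈ K, toLex (f y) ≤ toLex (f x) := by
  induction n generalizing K with
  | zero =>
    obtain ⟨x, hx⟩ := hne
    exact ⟨x, hx, fun y _ => (congrArg toLex (Subsingleton.elim (f y) (f x))).le⟩
  | succ n ih =>
    have hf₀ : Continuous (f · 0) := (continuous_apply 0).comp hf
    obtain ⟨x₀, hx₀, hmax₀⟩ := hK.exists_isMaxOn hne hf₀.continuousOn
    set K' := K ∩ {x | f x₀ 0 ≤ f x 0}
    have hK' : IsCompact K' := hK.inter_right (isClosed_le continuous_const hf₀)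
    obtain ⟨x, ⟨hxK, hx₀x⟩, hmax⟩ :=
      ih hK' ⟨x₀, hx₀, le_rfl⟩ (f := fun x => Fin.tail (f x)) (by fun_prop)
    refine ⟨x, hxK, fun y hy => ?_⟩
    rw [← Fin.cons_self_tail (f y), ← Fin.cons_self_tail (f x),
      Fin.toLex_cons_le_toLex_cons_iff]
    rcases (hmax₀ hy).trans hx₀x |>.lt_or_eq with hlt | heq
    · exact .inl hlt
    · exact .inr ⟨heq, hmax y ⟨hy, hx₀x.trans_eq heq.symm⟩⟩

theorem sortedVec_apply_eq_inf'_sup' {n : ℕ} (v : Fin n → ℝ) (i : Fin n) :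
    sortedVec v i = univ.inf' (univ_nonempty_iff.2 ⟨Fin.castLEEmb i.2⟩)
      fun e : Fin (i + 1) ↪ Fin n => univ.sup' univ_nonempty fun k => v (e k) := by
  set σ := Tuple.sort v
  have hmono : Monotone (v ∘ σ) := Tuple.monotone_sort v
  apply le_antisymm
  · refine le_inf' _ _ fun e _ => ?_
    -- pigeonhole: the `i + 1` values of `e` cannot all lie among the first `i` sorted positions
    obtain ⟨k, hk⟩ : ∃ k, i ≤ σ.symm (e k) := by
      by_contra! h
      have := Fintype.card_le_of_injective (fun k => (⟨σ.symm (e k), h k⟩ : Fin i))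
        fun a b hab => e.injective (σ.symm.injective (Fin.ext (Fin.mk.inj hab)))
      simp only [Fintype.card_fin] at this
      omega
    calc sortedVec v i = v (σ i) := rfl
      _ ≤ v (σ (σ.symm (e k))) := hmono hk
      _ = v (e k) := by rw [σ.apply_symm_apply]
      _ ≤ _ := le_sup' (fun k => v (e k)) (mem_univ k)
  · refine inf'_le_of_le _ (mem_univ ((Fin.castLEEmb i.2).trans σ.toEmbedding)) ?_
    exact sup'_le _ _ fun k _ => hmono (Fin.le_iff_val_le_val.2 (Nat.lt_succ_iff.1 k.2))

theorem continuous_sortedVec {n : ℕ} : Continuous (sortedVec : (Fin n → ℝ) → Fin n → ℝ) := by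
  refine continuous_pi fun i => ?_
  simp only [sortedVec_apply_eq_inf'_sup']
  exact Continuous.finset_inf'_apply _ fun e _ =>
    Continuous.finset_sup'_apply _ fun k _ => continuous_apply (e k)

theorem continuous_scov {S U : Type*} [Fintype S] [Fintype U] (A : S → U → ℝ) :
    Continuous (scov A) := by
  refine continuous_sortedVec.comp (continuous_pi fun i => ?_)
  unfold expSat
  fun_prop

theorem maxmin_fair_exists_general {S U : Type*} [Fintype S] [Fintype U] [Nonempty S]
    (A : S → U → ℝ) :
    ∃ F : S → ℝ, IsDistrib F ∧
      ∀ D : S → ℝ, IsDistrib D → lexGE (scov A F) (scov A D) := by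
  obtain ⟨F, hF, hmax⟩ := (isCompact_stdSimplex ℝ S).exists_forall_toLex_le
    (isPathConnected_stdSimplex S).nonempty (continuous_scov A)
  exact ⟨F, hF, fun D hD => lexGE_iff_toLex_le.2 (hmax D hD)⟩

/-- For every nonempty finite set of solutions, nonempty finite set of individuals,
and satisfaction function, there exists a maxmin-fair distribution. -/
theorem maxmin_fair_exists {S U : Type*} [Fintype S] [Fintype U] [Nonempty S] [Nonempty U]
    (A : S → U → ℝ) :
    ∃ F : S → ℝ, IsDistrib F ∧
      ∀ D : S → ℝ, IsDistrib D → lexGE (scov A F) (scov A D) :=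
  maxmin_fair_exists_general A
end

section
/- Let F be a maxmin-fair distribution over the set 𝒮 of valid rankings. If u₁, u₂ ∈ 𝒰 belong to the same class C_k and g(u₁) ≥ g(u₂), then the expected position values satisfy E_{r∼F}[f(r(u₁))] ≥ E_{r∼F}[f(r(u₂))]. -/
/-!
Suppose `u₂` had a strictly larger expected position value than `u₁`. Average `F` with its image
under exchanging `u₁` and `u₂` in every ranking. Since `u₁` and `u₂` are in the same class, the
exchange preserves validity, so the average `D` is again a distribution over valid rankings.
`D` leaves every other individual's expected value unchanged and lifts both `u₁` and `u₂` strictly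
above `F[u₁]`, which is the smaller of their two values under `F` as `g u₂ ≤ g u₁`. So at every
level up to `F[u₁]`, `D` has at most as many individuals at or below that level as `F`, and strictly
fewer at `F[u₁]` itself, which makes `scov D` lexicographically larger than `scov F`:
a contradiction with maxmin-fairness.
-/

open Finset

/-- A probability distribution supported on the valid rankings `Vld`. -/
def IsDistribOn {U : Type*} [Fintype U] [DecidableEq U]
    (Vld : (U ≃ Fin (Fintype.card U)) → Prop) (p : (U ≃ Fin (Fintype.card U)) → ℝ) : Prop :=
  (∀ r, 0 ≤ p r) ∧ (∑ r : U ≃ Fin (Fintype.card U), p r = 1) ∧ (∀ r, p r ≠ 0 → Vld r)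

/-- Expected value `D[u] = E_{r∼p}[f(r(u)) - g(u)]` of individual `u` under distribution `p`. -/
def EV {U : Type*} [Fintype U] [DecidableEq U] (f : Fin (Fintype.card U) → ℝ) (g : U → ℝ)
    (p : (U ≃ Fin (Fintype.card U)) → ℝ) (u : U) : ℝ :=
  ∑ r : U ≃ Fin (Fintype.card U), p r * (f (r u) - g u)

/-- The vector of expected values, sorted in increasing order. -/
noncomputable def scovR {U : Type*} [Fintype U] [DecidableEq U]
    (f : Fin (Fintype.card U) → ℝ) (g : U → ℝ) (p : (U ≃ Fin (Fintype.card U)) → ℝ) :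
    Fin (Fintype.card U) → ℝ :=
  sortedVec (fun i => EV f g p ((Fintype.equivFin U).symm i))

/-- `F` is a maxmin-fair distribution over the valid rankings `Vld`. -/
def MaxminFair {U : Type*} [Fintype U] [DecidableEq U]
    (Vld : (U ≃ Fin (Fintype.card U)) → Prop) (f : Fin (Fintype.card U) → ℝ) (g : U → ℝ)
    (F : (U ≃ Fin (Fintype.card U)) → ℝ) : Prop :=
  IsDistribOn Vld F ∧ ∀ D, IsDistribOn Vld D → lexGE (scovR f g F) (scovR f g D)

/-- A ranking is valid if, for every prefix length `i` and class `k`, the number of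
individuals of class `k` in the top `i` positions is between `lb i k` and `ub i k`. -/
def ValidLU {U : Type*} [Fintype U] {t : ℕ} (c : U → Fin t)
    (lb ub : Fin (Fintype.card U) → Fin t → ℕ) (r : U ≃ Fin (Fintype.card U)) : Prop :=
  ∀ i : Fin (Fintype.card U), ∀ k : Fin t,
    lb i k ≤ (Finset.univ.filter (fun u => c u = k ∧ r u ≤ i)).card ∧
    (Finset.univ.filter (fun u => c u = k ∧ r u ≤ i)).card ≤ ub i k

theorem lexGT_iff_toLex_lt {n : ℕ} {v w : Fin n → ℝ} : lexGT v w ↔ toLex w < toLex v := by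
  refine exists_congr fun i => ?_
  simp only [and_comm, eq_comm (a := v _)]
  rfl

section Counting

variable {n : ℕ}

theorem card_filter_sortedVec_le (v : Fin n → ℝ) (s : ℝ) :
    #{i | sortedVec v i ≤ s} = #{i | v i ≤ s} :=
  card_equiv (Tuple.sort v) fun i => by simp only [mem_filter, mem_univ, true_and]; rfl

theorem filter_le_subset_of_eqOn_Iio {v w : Fin n → ℝ} (hv : Monotone v) {i : Fin n}
    (hagree : Set.EqOn v w (Set.Iio i)) {s : ℝ} (hs : s < v i) :
    ({j | v j ≤ s} : Finset (Fin n)) ⊆ ({j | w j ≤ s} : Finset (Fin n)).filter (· < i) := by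
  intro j hj
  simp only [mem_filter, mem_univ, true_and] at hj ⊢
  have hji : j < i := lt_of_not_ge fun hij => (hv hij).not_gt (hj.trans_lt hs)
  exact ⟨hagree hji ▸ hj, hji⟩

theorem Monotone.toLex_lt_of_card_filter_le {v w : Fin n → ℝ} (hv : Monotone v) {t₀ : ℝ}
    (hle : ∀ s ≤ t₀, #{i | w i ≤ s} ≤ #{i | v i ≤ s})
    (hlt : #{i | w i ≤ t₀} < #{i | v i ≤ t₀}) :
    toLex v < toLex w := by
  refine lt_of_not_ge fun hwv => ?_
  rcases hwv.eq_or_lt with heq | ⟨i, hagree, hi⟩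
  · rw [toLex_inj.mp heq] at hlt
    exact hlt.false
  have hagree' : Set.EqOn v w (Set.Iio i) := fun j hj => (hagree j hj).symm
  by_cases hwi : w i ≤ t₀
  · have hsub := filter_le_subset_of_eqOn_Iio hv hagree' hi
    have hss : ({j | w j ≤ w i} : Finset (Fin n)).filter (· < i) ⊂ ({j | w j ≤ w i} : Finset _) :=
      filter_ssubset.2 ⟨i, by simp, lt_irrefl i⟩
    exact (hle _ hwi).not_gt ((card_le_card hsub).trans_lt (card_lt_card hss))
  · have hsub := filter_le_subset_of_eqOn_Iio hv hagree' ((not_le.1 hwi).trans hi)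
    exact hlt.not_ge (card_le_card (hsub.trans (filter_subset _ _)))

theorem toLex_sortedVec_lt_of_raise {a b : Fin n → ℝ} {t₀ : ℝ} (hab : ∀ i, b i ≠ a i → t₀ < b i)
    {i₀ : Fin n} (ha : a i₀ ≤ t₀) (hb : t₀ < b i₀) :
    toLex (sortedVec a) < toLex (sortedVec b) := by
  have hsub : ∀ s ≤ t₀, ({i | b i ≤ s} : Finset (Fin n)) ⊆ ({i | a i ≤ s} : Finset _) := by
    intro s hs i hi
    simp only [mem_filter, mem_univ, true_and] at hi ⊢
    by_contra hai
    exact (hab i (fun h => hai (h ▸ hi))).not_ge (hi.trans hs)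
  have hmono : Monotone (sortedVec a) := Tuple.monotone_sort a
  refine hmono.toLex_lt_of_card_filter_le (w := sortedVec b) (t₀ := t₀) (fun s hs => ?_) ?_ <;>
    rw [card_filter_sortedVec_le, card_filter_sortedVec_le]
  · exact card_le_card (hsub s hs)
  · exact card_lt_card ((ssubset_iff_of_subset (hsub t₀ le_rfl)).2 ⟨i₀, by simpa, by simpa⟩)

end Counting

section Rankings

variable {U : Type*} [Fintype U]

theorem ValidLU.perm_trans {t : ℕ} {c : U → Fin t} {lb ub : Fin (Fintype.card U) → Fin t → ℕ}
    {r : U ≃ Fin (Fintype.card U)} (h : ValidLU c lb ub r) {σ : Equiv.Perm U}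
    (hσ : ∀ u, c (σ u) = c u) : ValidLU c lb ub (σ.trans r) := by
  intro i k
  have hcard : #{u | c u = k ∧ (σ.trans r) u ≤ i} = #{u | c u = k ∧ r u ≤ i} :=
    card_equiv σ fun u => by rw [mem_filter, mem_filter]; simp [hσ]
  exact hcard ▸ h i k

variable [DecidableEq U]

def expectedPosValue (f : Fin (Fintype.card U) → ℝ) (p : (U ≃ Fin (Fintype.card U)) → ℝ) (u : U) :
    ℝ :=
  ∑ r : U ≃ Fin (Fintype.card U), p r * f (r u)

theorem EV_eq_expectedPosValue_sub (f : Fin (Fintype.card U) → ℝ) (g : U → ℝ)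
    {p : (U ≃ Fin (Fintype.card U)) → ℝ} (hp : ∑ r, p r = 1) (u : U) :
    EV f g p u = expectedPosValue f p u - g u := by
  simp only [EV, expectedPosValue, mul_sub, sum_sub_distrib, ← sum_mul, hp, one_mul]

theorem sum_perm_trans {M : Type*} [AddCommMonoid M] (σ : Equiv.Perm U)
    (φ : (U ≃ Fin (Fintype.card U)) → M) : ∑ r, φ (σ.trans r) = ∑ r, φ r :=
  Fintype.sum_equiv (σ.symm.equivCongr (Equiv.refl _)) _ _ fun _ => rfl

noncomputable def symmetrize (σ : Equiv.Perm U) (p : (U ≃ Fin (Fintype.card U)) → ℝ) :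
    (U ≃ Fin (Fintype.card U)) → ℝ :=
  fun r => (p r + p (σ.trans r)) / 2

theorem expectedPosValue_symmetrize (f : Fin (Fintype.card U) → ℝ) (σ : Equiv.Perm U)
    (p : (U ≃ Fin (Fintype.card U)) → ℝ) (u : U) :
    expectedPosValue f (symmetrize σ p) u =
      (expectedPosValue f p u + expectedPosValue f p (σ.symm u)) / 2 := by
  have hshift : ∑ r : U ≃ Fin (Fintype.card U), p (σ.trans r) * f (r u) =
      expectedPosValue f p (σ.symm u) := by
    simpa [expectedPosValue] using sum_perm_trans σ fun r => p r * f (r (σ.symm u))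
  simp only [expectedPosValue, symmetrize, add_div, add_mul, sum_add_distrib, div_mul_eq_mul_div,
    ← sum_div, hshift]

theorem IsDistribOn.symmetrize {Vld : (U ≃ Fin (Fintype.card U)) → Prop}
    {p : (U ≃ Fin (Fintype.card U)) → ℝ} (hp : IsDistribOn Vld p) (σ : Equiv.Perm U)
    (hσ : ∀ r, Vld r → Vld (σ.symm.trans r)) : IsDistribOn Vld (symmetrize σ p) := by
  obtain ⟨hnonneg, hsum, hsupp⟩ := hp
  refine ⟨fun r => div_nonneg (add_nonneg (hnonneg _) (hnonneg _)) zero_le_two, ?_, fun r hr => ?_⟩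
  · simp only [_root_.symmetrize, ← sum_div, sum_add_distrib, sum_perm_trans σ p, hsum]
    norm_num
  · by_cases hr₀ : p r = 0
    · have hσr : p (σ.trans r) ≠ 0 := fun h => hr (by simp [_root_.symmetrize, hr₀, h])
      simpa [← Equiv.trans_assoc] using hσ _ (hsupp _ hσr)
    · exact hsupp r hr₀

end Rankings

theorem intra_group_meritocracy_general {U : Type*} [Fintype U] [DecidableEq U] {t : ℕ}
    (c : U → Fin t) (lb ub : Fin (Fintype.card U) → Fin t → ℕ)
    (f : Fin (Fintype.card U) → ℝ) (g : U → ℝ)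
    (F : (U ≃ Fin (Fintype.card U)) → ℝ) (hF : MaxminFair (ValidLU c lb ub) f g F)
    (u₁ u₂ : U) (hclass : c u₁ = c u₂) (hg : g u₂ ≤ g u₁) :
    ∑ r : U ≃ Fin (Fintype.card U), F r * f (r u₂) ≤
      ∑ r : U ≃ Fin (Fintype.card U), F r * f (r u₁) := by
  change expectedPosValue f F u₂ ≤ expectedPosValue f F u₁
  by_contra! hlt
  obtain ⟨hFdist, hFopt⟩ := hF
  set τ := Equiv.swap u₁ u₂
  set D := symmetrize τ F
  have hDdist : IsDistribOn (ValidLU c lb ub) D :=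
    hFdist.symmetrize τ fun r hr => hr.perm_trans (Equiv.apply_swap_eq_self hclass)
  have hEV : ∀ u, EV f g D u = (expectedPosValue f F u + expectedPosValue f F (τ u)) / 2 - g u :=
    fun u => by rw [EV_eq_expectedPosValue_sub f g hDdist.2.1, expectedPosValue_symmetrize,
      Equiv.symm_swap]
  have hEVF := EV_eq_expectedPosValue_sub f g hFdist.2.1
  have hraise₁ : EV f g F u₁ < EV f g D u₁ := by
    rw [hEV, hEVF, Equiv.swap_apply_left]; linarith
  have hraise : ∀ u, EV f g D u ≠ EV f g F u → EV f g F u₁ < EV f g D u := by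
    intro u hu
    rcases eq_or_ne u u₁ with rfl | h₁
    · exact hraise₁
    rcases eq_or_ne u u₂ with rfl | h₂
    · rw [hEV, hEVF, Equiv.swap_apply_right]; linarith
    rw [hEV, hEVF, Equiv.swap_apply_of_ne_of_ne h₁ h₂, add_self_div_two] at hu
    exact absurd rfl hu
  have hlex : toLex (scovR f g F) < toLex (scovR f g D) :=
    toLex_sortedVec_lt_of_raise (fun i => hraise _) (i₀ := Fintype.equivFin U u₁) (by simp)
      (by simpa using hraise₁)
  exact (lexGE_iff_toLex_le.mp (hFopt D hDdist)).not_gt hlex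

/-- Intra-group meritocracy: for two individuals of the same class with `g u₂ ≤ g u₁`,
the maxmin-fair distribution gives `u₁` at least the expected position value of `u₂`. -/
theorem intra_group_meritocracy {U : Type*} [Fintype U] [DecidableEq U] {t : ℕ}
    (c : U → Fin t) (lb ub : Fin (Fintype.card U) → Fin t → ℕ)
    (f : Fin (Fintype.card U) → ℝ) (hf : Antitone f) (g : U → ℝ)
    (hS : ∃ r, ValidLU c lb ub r)
    (F : (U ≃ Fin (Fintype.card U)) → ℝ) (hF : MaxminFair (ValidLU c lb ub) f g F)
    (u₁ u₂ : U) (hclass : c u₁ = c u₂) (hg : g u₂ ≤ g u₁) :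
    ∑ r : U ≃ Fin (Fintype.card U), F r * f (r u₂) ≤
      ∑ r : U ≃ Fin (Fintype.card U), F r * f (r u₁) :=
  intra_group_meritocracy_general c lb ub f g F hF u₁ u₂ hclass hg
end

section
/- Let F be a maxmin-fair distribution over the set 𝒮 of valid rankings, and let u₁, u₂ ∈ 𝒰 belong to the same class C_k with g(u₁) ≥ g(u₂). If there exists a ranking r ∈ 𝒮 with F-probability p(r) > 0 such that f(r(u₂)) > f(r(u₁)), then F[u₁] ≥ F[u₂]. -/
open Finset

/-! If `F[u₁] < F[u₂]`, shift a little mass `η` from a ranking `r` in the support of `F` with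
`Δ = f (r u₂) - f (r u₁) > 0` onto `r` with `u₁` and `u₂` exchanged. The new ranking is valid
because `u₁` and `u₂` are in the same class; `u₁` gains `ηΔ`, `u₂` loses `ηΔ`, and nobody else
is affected. For small `η` both new values exceed the old `F[u₁]`, so the sorted value vector
increases strictly in the lexicographic order, contradicting maxmin-fairness. The lexicographic
comparison is done through the number of entries below each threshold, which sorting preserves. -/

noncomputable def countLE {n : ℕ} (v : Fin n → ℝ) (x : ℝ) : ℕ :=
  #{i | v i ≤ x}

section Sorting

variable {n : ℕ} {v w : Fin n → ℝ}

lemma countLE_comp_perm (v : Fin n → ℝ) (σ : Equiv.Perm (Fin n)) (x : ℝ) :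
    countLE (v ∘ σ) x = countLE v x :=
  card_equiv σ (by simp)

lemma countLE_sortedVec (v : Fin n → ℝ) (x : ℝ) : countLE (sortedVec v) x = countLE v x :=
  countLE_comp_perm v _ x

lemma exists_countLE_lt_of_lexGT (h : lexGT (sortedVec v) (sortedVec w)) :
    ∃ z, countLE v z < countLE w z ∧ ∀ y < z, countLE v y = countLE w y := by
  obtain ⟨j, hj, hpre⟩ := h
  have hv : Monotone (sortedVec v) := Tuple.monotone_sort v
  have hw : Monotone (sortedVec w) := Tuple.monotone_sort w
  refine ⟨sortedVec w j, ?_, fun y hy => ?_⟩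
  · rw [← countLE_sortedVec v, ← countLE_sortedVec w]
    calc countLE (sortedVec v) (sortedVec w j) ≤ #(Iio j) := by
          refine card_le_card fun i hi => ?_
          simp only [mem_filter, mem_univ, true_and] at hi
          exact mem_Iio.2 (lt_of_not_ge fun hji => (hi.trans_lt hj).not_ge (hv hji))
      _ < #(Iic j) := by simp
      _ ≤ countLE (sortedVec w) (sortedVec w j) :=
          card_le_card fun i hi => by simpa using hw (mem_Iic.1 hi)
  · rw [← countLE_sortedVec v, ← countLE_sortedVec w, countLE, countLE]
    congr 1
    refine filter_congr fun i _ => ?_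
    rcases lt_or_ge i j with hij | hji
    · rw [hpre i hij]
    · exact iff_of_false (fun hi => (hy.trans (hj.trans_le (hv hji))).not_ge hi)
        (fun hi => (hy.trans_le (hw hji)).not_ge hi)

lemma not_lexGE_sortedVec_of_countLE {x : ℝ} (hle : ∀ y ≤ x, countLE w y ≤ countLE v y)
    (hlt : countLE w x < countLE v x) : ¬ lexGE (sortedVec v) (sortedVec w) := by
  rintro (heq | hgt)
  · have := congrArg (countLE · x) heq
    simp only [countLE_sortedVec] at this
    omega
  · obtain ⟨z, hz, hbelow⟩ := exists_countLE_lt_of_lexGT hgt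
    rcases le_or_gt z x with hzx | hxz
    · exact (hle z hzx).not_gt hz
    · exact hlt.ne (hbelow x hxz).symm

lemma not_lexGE_sortedVec_of_raise {p q : Fin n} (hvw : ∀ i, i ≠ p → i ≠ q → v i = w i)
    (hp : v p < w p) (hq : v p < w q) : ¬ lexGE (sortedVec v) (sortedVec w) := by
  have hsub : ∀ y ≤ v p, ({i | w i ≤ y} : Finset (Fin n)) ⊆ ({i | v i ≤ y} : Finset (Fin n)) := by
    intro y hy i hi
    simp only [mem_filter, mem_univ, true_and] at hi ⊢
    have hip : i ≠ p := by rintro rfl; linarith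
    have hiq : i ≠ q := by rintro rfl; linarith
    rwa [hvw i hip hiq]
  refine not_lexGE_sortedVec_of_countLE (x := v p) (fun y hy => card_le_card (hsub y hy)) ?_
  refine card_lt_card ((ssubset_iff_of_subset (hsub _ le_rfl)).2 ⟨p, ?_, ?_⟩)
  · simp
  · simpa using hp

end Sorting

def transferMass {α : Type*} [DecidableEq α] (p : α → ℝ) (a b : α) (η : ℝ) (x : α) : ℝ :=
  p x + η * ((if x = b then 1 else 0) - (if x = a then 1 else 0))

lemma sum_transferMass_mul {α : Type*} [Fintype α] [DecidableEq α] (p : α → ℝ) (a b : α) (η : ℝ)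
    (φ : α → ℝ) : ∑ x, transferMass p a b η x * φ x = ∑ x, p x * φ x + η * (φ b - φ a) := by
  simp only [transferMass, add_mul, mul_sub, sub_mul, mul_assoc, sum_add_distrib, sum_sub_distrib,
    ← mul_sum, ite_mul, one_mul, zero_mul, sum_ite_eq', mem_univ, if_true]

section Rankings

variable {U : Type*} [Fintype U] [DecidableEq U]

lemma ValidLU.swap_trans {t : ℕ} {c : U → Fin t} {lb ub : Fin (Fintype.card U) → Fin t → ℕ}
    {r : U ≃ Fin (Fintype.card U)} (hr : ValidLU c lb ub r) {u₁ u₂ : U} (hclass : c u₁ = c u₂) :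
    ValidLU c lb ub ((Equiv.swap u₁ u₂).trans r) := by
  have hc : ∀ u, c (Equiv.swap u₁ u₂ u) = c u := fun u => by
    rcases eq_or_ne u u₁ with rfl | h₁
    · simp [hclass]
    rcases eq_or_ne u u₂ with rfl | h₂
    · simp [hclass]
    rw [Equiv.swap_apply_of_ne_of_ne h₁ h₂]
  intro i k
  have hcard : #{u | c u = k ∧ ((Equiv.swap u₁ u₂).trans r) u ≤ i} = #{u | c u = k ∧ r u ≤ i} :=
    card_equiv (Equiv.swap u₁ u₂) fun u => by simp only [mem_filter, mem_univ, true_and, hc]; rfl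
  rw [hcard]
  exact hr i k

lemma IsDistribOn.transfer {Vld : (U ≃ Fin (Fintype.card U)) → Prop}
    {p : (U ≃ Fin (Fintype.card U)) → ℝ} (hp : IsDistribOn Vld p) {a b : U ≃ Fin (Fintype.card U)}
    (hb : Vld b) {η : ℝ} (hη : 0 ≤ η) (hηa : η ≤ p a) :
    IsDistribOn Vld (transferMass p a b η) := by
  obtain ⟨hnn, hsum, hsupp⟩ := hp
  have hD : ∀ r, 0 ≤ transferMass p a b η r := fun r => by
    unfold transferMass
    split_ifs with hrb hra hra <;> subst_vars <;> linarith [hnn r]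
  have hDle : ∀ r, r ≠ b → transferMass p a b η r ≤ p r := fun r hrb => by
    simp only [transferMass, if_neg hrb]
    split_ifs <;> linarith
  refine ⟨hD, by simpa [hsum] using sum_transferMass_mul p a b η 1, fun r hr => ?_⟩
  by_cases hrb : r = b
  · exact hrb ▸ hb
  · exact hsupp r fun h0 => hr (le_antisymm (h0 ▸ hDle r hrb) (hD r))

lemma EV_transferMass (f : Fin (Fintype.card U) → ℝ) (g : U → ℝ)
    (p : (U ≃ Fin (Fintype.card U)) → ℝ) (a b : U ≃ Fin (Fintype.card U)) (η : ℝ) (u : U) :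
    EV f g (transferMass p a b η) u = EV f g p u + η * (f (b u) - f (a u)) := by
  rw [EV, sum_transferMass_mul, EV]
  ring

lemma not_lexGE_scovR {f : Fin (Fintype.card U) → ℝ} {g : U → ℝ}
    {F D : (U ≃ Fin (Fintype.card U)) → ℝ} {u₁ u₂ : U}
    (hother : ∀ u, u ≠ u₁ → u ≠ u₂ → EV f g F u = EV f g D u)
    (h₁ : EV f g F u₁ < EV f g D u₁) (h₂ : EV f g F u₁ < EV f g D u₂) :
    ¬ lexGE (scovR f g F) (scovR f g D) := by
  refine not_lexGE_sortedVec_of_raise (p := Fintype.equivFin U u₁) (q := Fintype.equivFin U u₂)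
    (fun i hi₁ hi₂ => ?_) (by simpa using h₁) (by simpa using h₂)
  exact hother _ (fun h => hi₁ (by simp [← h])) (fun h => hi₂ (by simp [← h]))

end Rankings

theorem meritocracy_swap_general {U : Type*} [Fintype U] [DecidableEq U] {t : ℕ}
    (c : U → Fin t) (lb ub : Fin (Fintype.card U) → Fin t → ℕ)
    (f : Fin (Fintype.card U) → ℝ) (g : U → ℝ)
    (F : (U ≃ Fin (Fintype.card U)) → ℝ) (hF : MaxminFair (ValidLU c lb ub) f g F)
    (u₁ u₂ : U) (hclass : c u₁ = c u₂)
    (hr : ∃ r : U ≃ Fin (Fintype.card U), 0 < F r ∧ f (r u₁) < f (r u₂)) :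
    EV f g F u₂ ≤ EV f g F u₁ := by
  obtain ⟨r, hFr, hlt⟩ := hr
  by_contra! hgap
  set Δ := f (r u₂) - f (r u₁)
  have hΔ : 0 < Δ := sub_pos.2 hlt
  set η := min (F r) ((EV f g F u₂ - EV f g F u₁) / (2 * Δ))
  have hη : 0 < η := lt_min hFr (div_pos (sub_pos.2 hgap) (by positivity))
  have hηΔ : η * Δ ≤ (EV f g F u₂ - EV f g F u₁) / 2 := by
    calc η * Δ ≤ (EV f g F u₂ - EV f g F u₁) / (2 * Δ) * Δ := by gcongr; exact min_le_right _ _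
      _ = (EV f g F u₂ - EV f g F u₁) / 2 := by field_simp
  have hD := hF.1.transfer ((hF.1.2.2 r hFr.ne').swap_trans hclass) hη.le (min_le_left _ _)
  refine not_lexGE_scovR (u₁ := u₁) (u₂ := u₂) (fun u h₁ h₂ => ?_) ?_ ?_ (hF.2 _ hD)
  · simp [EV_transferMass, Equiv.swap_apply_of_ne_of_ne h₁ h₂]
  · simp only [EV_transferMass, Equiv.trans_apply, Equiv.swap_apply_left]
    linarith [mul_pos hη hΔ]
  · simp only [EV_transferMass, Equiv.trans_apply, Equiv.swap_apply_right]
    linarith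

/-- If some ranking with positive probability under the maxmin-fair distribution `F`
places `u₂` at a strictly better position value than `u₁`, where `u₁, u₂` are in the
same class and `g u₁ ≥ g u₂`, then `F[u₁] ≥ F[u₂]`. -/
theorem meritocracy_swap {U : Type*} [Fintype U] [DecidableEq U] {t : ℕ}
    (c : U → Fin t) (lb ub : Fin (Fintype.card U) → Fin t → ℕ)
    (f : Fin (Fintype.card U) → ℝ) (hf : Antitone f) (g : U → ℝ)
    (hS : ∃ r, ValidLU c lb ub r)
    (F : (U ≃ Fin (Fintype.card U)) → ℝ) (hF : MaxminFair (ValidLU c lb ub) f g F)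
    (u₁ u₂ : U) (hclass : c u₁ = c u₂) (hg : g u₂ ≤ g u₁)
    (hr : ∃ r : U ≃ Fin (Fintype.card U), 0 < F r ∧ f (r u₁) < f (r u₂)) :
    EV f g F u₂ ≤ EV f g F u₁ :=
  meritocracy_swap_general c lb ub f g F hF u₁ u₂ hclass hr
end

section
/- Let λ : 𝒰 → ℝ. In the setting of valid rankings with only upper-bound constraints, there exists a distribution D over 𝒮 such that D[u] ≥ λ(u) for all u ∈ 𝒰 if and only if for every subset X ⊆ 𝒰 it holds that max_{r∈𝒮} ∑_{u∈X} V(r,u) ≥ ∑_{u∈X} λ(u). -/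
/-!
The forward direction averages the bound over the distribution. For the converse, the vectors of
expected values of distributions form a compact convex set `K`. If `λ` is not dominated by a point
of `K`, a separating hyperplane yields weights `w ≥ 0` with `∑ w λ > ∑ w y` for every `y ∈ K`.
Since `∑ w x` is a nonnegative combination of the sums of `x` over the superlevel sets of `w`, it
suffices to find one valid ranking that maximises `∑_{u ∈ X} V(r, u)` for all these sets `X` at
once. With upper-bound constraints only, a valid ranking minimising `∑ w(u) r(u)` does: no
exchange can move a higher priority forward in it, and exchanges of that kind turn any valid
ranking, position by position, into it without decreasing any of the objectives.
-/

open Finset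

/-- A ranking is valid if, for every prefix length `i` and class `k`, the number of
individuals of class `k` in the top `i` positions is at most `ub i k`. -/
def ValidUB {U : Type*} [Fintype U] {t : ℕ} (c : U → Fin t)
    (ub : Fin (Fintype.card U) → Fin t → ℕ) (r : U ≃ Fin (Fintype.card U)) : Prop :=
  ∀ i : Fin (Fintype.card U), ∀ k : Fin t,
    (Finset.univ.filter (fun u => c u = k ∧ r u ≤ i)).card ≤ ub i k

/-- `Hfun Vld f g E` is the maximum over valid rankings `r` of `∑_{u ∈ E} (f (r u) - g u)`. -/
noncomputable def Hfun {U : Type*} [Fintype U] [DecidableEq U]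
    (Vld : (U ≃ Fin (Fintype.card U)) → Prop)
    (f : Fin (Fintype.card U) → ℝ) (g : U → ℝ) (E : Finset U) : ℝ :=
  sSup ((fun r : U ≃ Fin (Fintype.card U) => ∑ u ∈ E, (f (r u) - g u)) '' {r | Vld r})

theorem Finset.sum_mul_le_sum_mul_of_forall_filter_lt {ι : Type*} (s : Finset ι)
    {w x y : ι → ℝ} (hw : ∀ i ∈ s, 0 ≤ w i)
    (h : ∀ θ, ∑ i ∈ s with θ < w i, x i ≤ ∑ i ∈ s with θ < w i, y i) :
    ∑ i ∈ s, w i * x i ≤ ∑ i ∈ s, w i * y i := by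
  induction s using Finset.strongInduction generalizing w with
  | H s ih =>
  rcases s.eq_empty_or_nonempty with rfl | hs
  · simp
  obtain ⟨i₀, hi₀, hmin⟩ := s.exists_min_image w hs
  set m := w i₀
  -- Peel off the bottom layer `m` of `w`; what remains is supported where `m < w`.
  have hpeel : ∀ z : ι → ℝ, ∑ i ∈ s, w i * z i
      = m * ∑ i ∈ s, z i + ∑ i ∈ s with m < w i, (w i - m) * z i := by
    intro z
    rw [Finset.sum_filter_of_ne fun i hi hne => lt_of_le_of_ne (hmin i hi) fun he =>
      hne (by rw [← he, sub_self, zero_mul]), Finset.mul_sum, ← Finset.sum_add_distrib]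
    exact Finset.sum_congr rfl fun i _ => by ring
  have hbottom : ∑ i ∈ s, x i ≤ ∑ i ∈ s, y i := by
    simpa [Finset.filter_true_of_mem fun i hi => (sub_one_lt m).trans_le (hmin i hi)]
      using h (m - 1)
  have htop := ih (s.filter (m < w ·))
    (Finset.filter_ssubset.2 ⟨i₀, hi₀, lt_irrefl m⟩) (w := fun i => w i - m)
    (fun i hi => sub_nonneg.2 (Finset.mem_filter.1 hi).2.le) fun θ => by
      simpa only [Finset.filter_filter, ← lt_sub_iff_add_lt, max_lt_iff, sub_pos, and_comm]
        using h (max θ 0 + m)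
  rw [hpeel x, hpeel y]
  have := mul_le_mul_of_nonneg_left hbottom (hw i₀ hi₀)
  linarith

theorem exists_nonneg_weights_of_notMem_lowerClosure {ι : Type*} [Fintype ι]
    {K : Set (ι → ℝ)} (hK : IsCompact K) (hKc : Convex ℝ K) {x : ι → ℝ}
    (hx : x ∉ lowerClosure K) :
    ∃ w : ι → ℝ, (∀ i, 0 ≤ w i) ∧ ∀ y ∈ K, ∑ i, w i * y i < ∑ i, w i * x i := by
  classical
  rcases K.eq_empty_or_nonempty with rfl | ⟨y₀, hy₀⟩
  · exact ⟨0, fun _ => le_rfl, by simp⟩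
  have hconv : Convex ℝ (lowerClosure K : Set (ι → ℝ)) := by
    rintro _ ⟨y₁, hy₁, hz₁⟩ _ ⟨y₂, hy₂, hz₂⟩ a b ha hb hab
    exact ⟨a • y₁ + b • y₂, hKc hy₁ hy₂ ha hb hab,
      add_le_add (smul_le_smul_of_nonneg_left hz₁ ha) (smul_le_smul_of_nonneg_left hz₂ hb)⟩
  obtain ⟨φ, β, hφK, hφx⟩ := geometric_hahn_banach_closed_point hconv
    (hK.isClosed.lowerClosure_pi hK.isBounded.bddAbove) hx
  set w : ι → ℝ := fun i => φ (Pi.single i 1)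
  have hφ : ∀ z, φ z = ∑ i, w i * z i := fun z => by
    refine ((φ : (ι → ℝ) →ₗ[ℝ] ℝ).pi_apply_eq_sum_univ z).trans (Finset.sum_congr rfl fun i _ => ?_)
    have hsingle : (fun j => if i = j then (1 : ℝ) else 0) = Pi.single i 1 := by
      funext j; simp [Pi.single_apply, eq_comm]
    rw [hsingle, smul_eq_mul, mul_comm]
    rfl
  refine ⟨w, fun i => ?_, fun y hy => ?_⟩
  · -- Otherwise `φ` is unbounded above on the ray `y₀ - s • eᵢ`, `s ≥ 0`, in `lowerClosure K`.
    by_contra! hwi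
    set s := (β - φ y₀) / -w i with hs
    have hmem : y₀ - s • Pi.single i 1 ∈ lowerClosure K := by
      refine mem_lowerClosure.2 ⟨y₀, hy₀, sub_le_self _ (smul_nonneg ?_ ?_)⟩
      · exact div_nonneg (sub_nonneg.2 (hφK y₀ (subset_lowerClosure hy₀)).le) (neg_nonneg.2 hwi.le)
      · exact Pi.single_nonneg.2 zero_le_one
    have hlt := hφK _ hmem
    rw [map_sub, map_smul, smul_eq_mul] at hlt
    change φ y₀ - s * w i < β at hlt
    have : s * w i = φ y₀ - β := by
      rw [hs, div_mul_eq_mul_div, div_neg, mul_div_assoc, div_self hwi.ne]; ring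
    linarith
  · rw [← hφ, ← hφ]
    exact (hφK y (subset_lowerClosure hy)).trans hφx

section Distributions

variable {U : Type*} [Fintype U] [DecidableEq U] {Vld : (U ≃ Fin (Fintype.card U)) → Prop}

theorem isCompact_setOf_isDistribOn : IsCompact {p | IsDistribOn Vld p} := by
  have hsupp : IsClosed {p : (U ≃ Fin (Fintype.card U)) → ℝ | ∀ r, p r ≠ 0 → Vld r} := by
    simp only [Set.ofPred_forall]
    refine isClosed_iInter fun r => ?_
    by_cases hr : Vld r
    · simp [hr]
    · simpa [hr] using isClosed_eq (continuous_apply r) continuous_const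
  convert (isCompact_stdSimplex ℝ _).inter_right hsupp using 1
  ext p
  simp [IsDistribOn, stdSimplex, and_assoc]

theorem convex_setOf_isDistribOn : Convex ℝ {p | IsDistribOn Vld p} := by
  rintro p ⟨hp₀, hp₁, hpV⟩ q ⟨hq₀, hq₁, hqV⟩ a b ha hb hab
  refine ⟨fun r => add_nonneg (mul_nonneg ha (hp₀ r)) (mul_nonneg hb (hq₀ r)), ?_,
    fun r hr => ?_⟩
  · simp [Finset.sum_add_distrib, ← Finset.mul_sum, hp₁, hq₁, hab]
  · by_contra hv
    simp [not_not.1 (mt (hpV r) hv), not_not.1 (mt (hqV r) hv)] at hr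

theorem isDistribOn_single {r : U ≃ Fin (Fintype.card U)} (hr : Vld r) :
    IsDistribOn Vld (Pi.single r 1) := by
  refine ⟨fun r' => ?_, by simp, fun r' hr' => ?_⟩
  · rw [Pi.single_apply]; split_ifs <;> norm_num
  · obtain rfl : r' = r := by_contra fun h => hr' (Pi.single_eq_of_ne h 1)
    exact hr

variable (f : Fin (Fintype.card U) → ℝ) (g : U → ℝ)

theorem EV_single (r : U ≃ Fin (Fintype.card U)) (u : U) :
    EV f g (Pi.single r 1) u = f (r u) - g u := by
  simp [EV, Pi.single_apply]

def EV.linearMap : ((U ≃ Fin (Fintype.card U)) → ℝ) →ₗ[ℝ] U → ℝ where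
  toFun := EV f g
  map_add' p q := by ext u; simp [EV, add_mul, Finset.sum_add_distrib]
  map_smul' a p := by ext u; simp [EV, Finset.mul_sum, mul_assoc]

theorem le_Hfun {E : Finset U} {r : U ≃ Fin (Fintype.card U)} (hr : Vld r) :
    ∑ u ∈ E, (f (r u) - g u) ≤ Hfun Vld f g E :=
  le_csSup ((Set.toFinite _).bddAbove) (Set.mem_image_of_mem _ hr)

theorem Hfun_eq_of_forall_le {E : Finset U} {r : U ≃ Fin (Fintype.card U)} (hr : Vld r)
    (hmax : ∀ s, Vld s → ∑ u ∈ E, (f (s u) - g u) ≤ ∑ u ∈ E, (f (r u) - g u)) :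
    Hfun Vld f g E = ∑ u ∈ E, (f (r u) - g u) :=
  IsGreatest.csSup_eq ⟨Set.mem_image_of_mem _ hr, by rintro _ ⟨s, hs, rfl⟩; exact hmax s hs⟩

theorem sum_EV_le_Hfun {p : (U ≃ Fin (Fintype.card U)) → ℝ} (hp : IsDistribOn Vld p)
    (E : Finset U) : ∑ u ∈ E, EV f g p u ≤ Hfun Vld f g E :=
  calc ∑ u ∈ E, EV f g p u = ∑ r, p r * ∑ u ∈ E, (f (r u) - g u) := by
        simp only [EV, Finset.mul_sum]; exact Finset.sum_comm
    _ ≤ ∑ r, p r * Hfun Vld f g E := Finset.sum_le_sum fun r _ => by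
        rcases eq_or_ne (p r) 0 with h | h
        · simp [h]
        · exact mul_le_mul_of_nonneg_left (le_Hfun f g (hp.2.2 r h)) (hp.1 r)
    _ = Hfun Vld f g E := by rw [← Finset.sum_mul, hp.2.1, one_mul]

end Distributions

section Swaps

variable {ι β : Type*} [Fintype ι] [DecidableEq ι]

theorem sum_mul_comp_swap {R : Type*} [CommRing R] (a F : ι → R) (u v : ι) :
    ∑ x, a x * F (Equiv.swap u v x) = ∑ x, a x * F x + (a u - a v) * (F v - F u) := by
  rcases eq_or_ne u v with rfl | huv
  · simp
  have hreindex : ∑ x, a x * F (Equiv.swap u v x) = ∑ x, a (Equiv.swap u v x) * F x := by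
    simpa using Equiv.sum_comp (Equiv.swap u v) fun x => a (Equiv.swap u v x) * F x
  have hdiff : ∑ x, (a (Equiv.swap u v x) - a x) * F x
      = (a v - a u) * F u + (a u - a v) * F v := by
    rw [Fintype.sum_eq_add u v huv fun x hx => by
      rw [Equiv.swap_apply_of_ne_of_ne hx.1 hx.2, sub_self, zero_mul]]
    simp
  simp only [sub_mul, Finset.sum_sub_distrib] at hdiff
  linear_combination hreindex + hdiff

theorem sum_mul_le_sum_mul_swap_trans [Preorder β] {a : ι → ℝ} {f : β → ℝ} (hf : Antitone f)
    {s : ι ≃ β} {u v : ι} (hs : s v ≤ s u) (ha : a v ≤ a u) :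
    ∑ x, a x * f (s x) ≤ ∑ x, a x * f (((Equiv.swap u v).trans s) x) := by
  simp only [Equiv.trans_apply]
  rw [sum_mul_comp_swap a (fun x => f (s x))]
  exact le_add_of_nonneg_right (mul_nonneg (sub_nonneg.2 ha) (sub_nonneg.2 (hf hs)))

theorem sum_mul_swap_trans_lt {w : ι → ℝ} {n : ℕ} {r : ι ≃ Fin n} {u v : ι} (hr : r v < r u)
    (hw : w v < w u) :
    ∑ x, w x * (((Equiv.swap u v).trans r) x : ℝ) < ∑ x, w x * (r x : ℝ) := by
  simp only [Equiv.trans_apply]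
  rw [sum_mul_comp_swap w (fun x => (r x : ℝ))]
  exact add_lt_of_neg_right _
    (mul_neg_of_pos_of_neg (sub_pos.2 hw) (sub_neg.2 (by exact_mod_cast hr)))

end Swaps

def AgreeBelow {α : Type*} {n : ℕ} (r s : α ≃ Fin n) (m : ℕ) : Prop :=
  ∀ x, (r x : ℕ) < m → s x = r x

theorem AgreeBelow.symm {α : Type*} {n : ℕ} {r s : α ≃ Fin n} {m : ℕ} (h : AgreeBelow r s m) :
    AgreeBelow s r m := fun x hx => by
  have hx' : r.symm (s x) = x := s.injective (by rw [h _ (by simpa using hx), r.apply_symm_apply])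
  rw [← hx', r.apply_symm_apply, hx']

section Rankings

variable {U : Type*} [Fintype U] {t : ℕ} {c : U → Fin t}
  {ub : Fin (Fintype.card U) → Fin t → ℕ} {r s : U ≃ Fin (Fintype.card U)}

/-- Position `p` of `r` can take one more individual of class `k` without exceeding the bound
of any prefix that contains `p`. -/
def ClassOpen (c : U → Fin t) (ub : Fin (Fintype.card U) → Fin t → ℕ)
    (r : U ≃ Fin (Fintype.card U)) (p : Fin (Fintype.card U)) (k : Fin t) : Prop :=
  ∀ i, p ≤ i → (univ.filter fun x => c x = k ∧ r x < p).card < ub i k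

def LocallyGreedy (c : U → Fin t) (ub : Fin (Fintype.card U) → Fin t → ℕ) (w : U → ℝ)
    (r : U ≃ Fin (Fintype.card U)) : Prop :=
  ∀ x p, p ≤ r x → ClassOpen c ub r p (c x) → w x ≤ w (r.symm p)

theorem AgreeBelow.classOpen_iff {p : Fin (Fintype.card U)} (h : AgreeBelow r s p) {k : Fin t} :
    ClassOpen c ub s p k ↔ ClassOpen c ub r p k := by
  have hset : (univ.filter fun x => c x = k ∧ s x < p) = univ.filter fun x => c x = k ∧ r x < p :=
    Finset.filter_congr fun x _ => and_congr_right fun _ =>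
      ⟨fun hx => by rwa [h.symm x hx], fun hx => by rwa [h x hx]⟩
  simp only [ClassOpen, hset]

theorem exists_first_of_class (c : U → Fin t) (r : U ≃ Fin (Fintype.card U))
    {p : Fin (Fintype.card U)} {x : U} (hpx : p ≤ r x) :
    ∃ y, c y = c x ∧ p ≤ r y ∧ ∀ z, c z = c x → p ≤ r z → r y ≤ r z := by
  obtain ⟨y, hy, hmin⟩ := (univ.filter fun z => c z = c x ∧ p ≤ r z).exists_min_image r
    ⟨x, by simpa using hpx⟩
  simp only [mem_filter, mem_univ, true_and] at hy hmin
  exact ⟨y, hy.1, hy.2, fun z hz hpz => hmin z ⟨hz, hpz⟩⟩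

variable [DecidableEq U]

theorem ValidUB.classOpen_apply (h : ValidUB c ub r) (y : U) : ClassOpen c ub r (r y) (c y) := by
  intro i hi
  have hy : y ∉ univ.filter fun x => c x = c y ∧ r x < r y := by simp
  calc (univ.filter fun x => c x = c y ∧ r x < r y).card
      < (insert y (univ.filter fun x => c x = c y ∧ r x < r y)).card :=
        Finset.card_lt_card (Finset.ssubset_insert hy)
    _ ≤ (univ.filter fun x => c x = c y ∧ r x ≤ i).card := Finset.card_le_card fun x hx => by
        simp only [mem_insert, mem_filter, mem_univ, true_and] at hx ⊢
        rcases hx with rfl | ⟨hc, hlt⟩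
        · exact ⟨rfl, hi⟩
        · exact ⟨hc, hlt.le.trans hi⟩
    _ ≤ ub i (c y) := h i (c y)

theorem ValidUB.swap_of_class_eq (h : ValidUB c ub r) {u v : U} (huv : c u = c v) :
    ValidUB c ub ((Equiv.swap u v).trans r) := fun i k =>
  (Finset.card_equiv (Equiv.swap u v) fun x => by
    simp only [mem_filter, mem_univ, true_and, Equiv.apply_swap_eq_self huv]
    rfl).trans_le (h i k)

theorem ValidUB.swap_of_classOpen (h : ValidUB c ub r) {u v : U} (hc : c v ≠ c u)
    (hvu : r v < r u) (hfirst : ∀ z, c z = c u → r v ≤ r z → r u ≤ r z)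
    (hopen : ClassOpen c ub r (r v) (c u)) : ValidUB c ub ((Equiv.swap u v).trans r) := by
  intro i k
  by_cases hcase : k = c u ∧ r v ≤ i ∧ i < r u
  · obtain ⟨rfl, hvi, hiu⟩ := hcase
    refine (Finset.card_le_card fun x hx => ?_).trans
      ((Finset.card_insert_le u _).trans (Nat.succ_le_of_lt (hopen i hvi)))
    simp only [mem_filter, mem_univ, true_and, mem_insert] at hx ⊢
    rw [Equiv.trans_apply] at hx
    rcases eq_or_ne x u with rfl | hxu
    · exact .inl rfl
    rcases eq_or_ne x v with rfl | hxv
    · exact absurd hx.1 hc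
    rw [Equiv.swap_apply_of_ne_of_ne hxu hxv] at hx
    exact .inr ⟨hx.1, lt_of_not_ge fun hle => (hfirst x hx.1 hle).not_gt (hx.2.trans_lt hiu)⟩
  · refine (Finset.card_le_card fun x hx => ?_).trans (h i k)
    simp only [mem_filter, mem_univ, true_and] at hx ⊢
    rw [Equiv.trans_apply] at hx
    refine ⟨hx.1, ?_⟩
    rcases eq_or_ne x u with rfl | hxu
    · rw [Equiv.swap_apply_left] at hx
      exact le_of_not_gt fun hiu => hcase ⟨hx.1.symm, hx.2, hiu⟩
    rcases eq_or_ne x v with rfl | hxv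
    · rw [Equiv.swap_apply_right] at hx
      exact hvu.le.trans hx.2
    · rw [Equiv.swap_apply_of_ne_of_ne hxu hxv] at hx
      exact hx.2

theorem exists_validUB_locallyGreedy (hS : ∃ r, ValidUB c ub r) (w : U → ℝ) :
    ∃ r, ValidUB c ub r ∧ LocallyGreedy c ub w r := by
  classical
  -- A valid ranking minimising `∑ x, w x * r x` admits none of the exchanges below.
  obtain ⟨r, hr, hmin⟩ := (univ.filter (ValidUB c ub)).exists_min_image
    (fun r => ∑ x, w x * (r x : ℝ)) (by simpa [Finset.Nonempty] using hS)
  simp only [mem_filter, mem_univ, true_and] at hr hmin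
  refine ⟨r, hr, fun x p hpx hopen => ?_⟩
  by_contra! hlt
  obtain ⟨y, hyc, hpy, hyfirst⟩ := exists_first_of_class c r hpx
  rcases lt_or_ge (w y) (w x) with hyx | hxy
  · have hne : r y ≠ r x := fun h => hyx.ne (congrArg w (r.injective h))
    exact (sum_mul_swap_trans_lt (lt_of_le_of_ne (hyfirst x rfl hpx) hne) hyx).not_ge
      (hmin _ (hr.swap_of_class_eq hyc.symm))
  · set z := r.symm p
    have hrz : r z = p := r.apply_symm_apply p
    have hzy : r z < r y := lt_of_le_of_ne (hrz ▸ hpy) fun h =>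
      (hlt.trans_le hxy).ne (congrArg w (r.injective h))
    have hcz : c z ≠ c y := fun h => (hyfirst z (h.trans hyc) hrz.ge).not_gt hzy
    have hvalid := hr.swap_of_classOpen hcz hzy
      (fun z' hz' hle => hyfirst z' (hz'.trans hyc) (hrz ▸ hle)) (by rwa [hrz, hyc])
    exact (sum_mul_swap_trans_lt hzy (hlt.trans_le hxy)).not_ge (hmin _ hvalid)

end Rankings

namespace LocallyGreedy

variable {U : Type*} [Fintype U] [DecidableEq U] {t : ℕ} {c : U → Fin t}
  {ub : Fin (Fintype.card U) → Fin t → ℕ} {w a : U → ℝ} {f : Fin (Fintype.card U) → ℝ}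
  {rs s : U ≃ Fin (Fintype.card U)}

theorem exists_swap_first_of_class (hrs : ValidUB c ub rs) (hg : LocallyGreedy c ub w rs)
    (ha : ∀ x y, w x ≤ w y → a x ≤ a y) (hf : Antitone f) (hs : ValidUB c ub s)
    {p : Fin (Fintype.card U)} (hag : AgreeBelow rs s p) :
    ∃ s', ValidUB c ub s' ∧ AgreeBelow rs s' p ∧
      ∑ x, a x * f (s x) ≤ ∑ x, a x * f (s' x) ∧ p ≤ s' (rs.symm p) ∧
      ∀ z, c z = c (rs.symm p) → p ≤ s' z → s' (rs.symm p) ≤ s' z := by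
  set u := rs.symm p
  have hru : rs u = p := rs.apply_symm_apply p
  have hpu : p ≤ s u := le_of_not_gt fun h => h.ne ((hag.symm u h).symm.trans hru)
  obtain ⟨y, hyc, hpy, hyfirst⟩ := exists_first_of_class c s hpu
  have hpy' : p ≤ rs y := le_of_not_gt fun h => hpy.not_gt (hag y h ▸ h)
  have hwy : w y ≤ w u := hg y p hpy' (by rw [hyc, ← hru]; exact hrs.classOpen_apply u)
  refine ⟨(Equiv.swap u y).trans s, hs.swap_of_class_eq hyc.symm, fun x hx => ?_,
    sum_mul_le_sum_mul_swap_trans hf (hyfirst u rfl hpu) (ha _ _ hwy), ?_, fun z hz hpz => ?_⟩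
  · have hxu : x ≠ u := by rintro rfl; exact hx.ne (congrArg Fin.val hru)
    have hxy : x ≠ y := by rintro rfl; exact hpy'.not_gt hx
    simpa [Equiv.swap_apply_of_ne_of_ne hxu hxy] using hag x hx
  · simpa using hpy
  · simp only [Equiv.trans_apply, Equiv.swap_apply_left] at hpz ⊢
    exact hyfirst _ ((Equiv.apply_swap_eq_self hyc.symm z).trans hz) hpz

theorem exists_agreeBelow_succ_of_first (hrs : ValidUB c ub rs) (hg : LocallyGreedy c ub w rs)
    (ha : ∀ x y, w x ≤ w y → a x ≤ a y) (hf : Antitone f) (hs : ValidUB c ub s)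
    {p : Fin (Fintype.card U)} (hag : AgreeBelow rs s p) (hpu : p ≤ s (rs.symm p))
    (hfirst : ∀ z, c z = c (rs.symm p) → p ≤ s z → s (rs.symm p) ≤ s z) :
    ∃ s', ValidUB c ub s' ∧ AgreeBelow rs s' ((p : ℕ) + 1) ∧
      ∑ x, a x * f (s x) ≤ ∑ x, a x * f (s' x) := by
  set u := rs.symm p
  set v := s.symm p
  have hru : rs u = p := rs.apply_symm_apply p
  have hsv : s v = p := s.apply_symm_apply p
  have hpv : p ≤ rs v := le_of_not_gt fun h => h.ne ((hag v h).symm.trans hsv)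
  have hwv : w v ≤ w u := hg v p hpv (hag.classOpen_iff.1 (hsv ▸ hs.classOpen_apply v))
  have hvalid : ValidUB c ub ((Equiv.swap u v).trans s) := by
    by_cases hcv : c v = c u
    · exact hs.swap_of_class_eq hcv.symm
    have hvu : s v < s u := lt_of_le_of_ne (hsv ▸ hpu) fun h => hcv (by rw [s.injective h])
    refine hs.swap_of_classOpen hcv hvu (fun z hz hle => hfirst z hz (hsv ▸ hle)) ?_
    rw [hsv]
    exact hag.classOpen_iff.2 (hru ▸ hrs.classOpen_apply u)
  refine ⟨_, hvalid, fun x hx => ?_, sum_mul_le_sum_mul_swap_trans hf (hsv ▸ hpu) (ha _ _ hwv)⟩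
  rcases eq_or_ne x u with rfl | hxu
  · simp [hsv, hru]
  have hxp : rs x < p := lt_of_le_of_ne (Nat.lt_succ_iff.1 hx) fun h =>
    hxu (rs.injective (h.trans hru.symm))
  have hxv : x ≠ v := by rintro rfl; exact hpv.not_gt hxp
  simpa [Equiv.swap_apply_of_ne_of_ne hxu hxv] using hag x hxp

/-- Two exchanges move `u := rs.symm p` to position `p`: first within its class, to the first
position `≥ p` of that class in `s`, then across classes with the occupant of `p`. Local
greediness of `rs` makes sure that neither exchange moves a lower priority forward. -/
theorem exists_agreeBelow_succ (hrs : ValidUB c ub rs) (hg : LocallyGreedy c ub w rs)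
    (ha : ∀ x y, w x ≤ w y → a x ≤ a y) (hf : Antitone f) (hs : ValidUB c ub s)
    {p : Fin (Fintype.card U)} (hag : AgreeBelow rs s p) :
    ∃ s', ValidUB c ub s' ∧ AgreeBelow rs s' ((p : ℕ) + 1) ∧
      ∑ x, a x * f (s x) ≤ ∑ x, a x * f (s' x) := by
  obtain ⟨s₁, hs₁, hag₁, hle₁, hpu, hfirst⟩ := exists_swap_first_of_class hrs hg ha hf hs hag
  obtain ⟨s₂, hs₂, hag₂, hle₂⟩ := exists_agreeBelow_succ_of_first hrs hg ha hf hs₁ hag₁ hpu hfirst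
  exact ⟨s₂, hs₂, hag₂, hle₁.trans hle₂⟩

theorem sum_mul_le (hrs : ValidUB c ub rs) (hg : LocallyGreedy c ub w rs)
    (ha : ∀ x y, w x ≤ w y → a x ≤ a y) (hf : Antitone f) (hs : ValidUB c ub s) :
    ∑ x, a x * f (s x) ≤ ∑ x, a x * f (rs x) := by
  have key : ∀ m ≤ Fintype.card U, ∃ s', ValidUB c ub s' ∧ AgreeBelow rs s' m ∧
      ∑ x, a x * f (s x) ≤ ∑ x, a x * f (s' x) := by
    intro m hm
    induction m with
    | zero => exact ⟨s, hs, fun x hx => absurd hx (Nat.not_lt_zero _), le_rfl⟩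
    | succ m ih =>
      obtain ⟨s₁, hs₁, hag₁, hle₁⟩ := ih (by omega)
      obtain ⟨s₂, hs₂, hag₂, hle₂⟩ :=
        exists_agreeBelow_succ hrs hg ha hf hs₁ (p := ⟨m, by omega⟩) hag₁
      exact ⟨s₂, hs₂, hag₂, hle₁.trans hle₂⟩
  obtain ⟨s', -, hag, hle⟩ := key _ le_rfl
  rwa [Equiv.ext fun x => hag x (rs x).isLt] at hle

theorem sum_filter_lt_le (hrs : ValidUB c ub rs) (hg : LocallyGreedy c ub w rs)
    (hf : Antitone f) (hs : ValidUB c ub s) (θ : ℝ) :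
    ∑ x ∈ univ.filter (θ < w ·), f (s x) ≤ ∑ x ∈ univ.filter (θ < w ·), f (rs x) := by
  simpa only [Finset.sum_filter, ite_mul, one_mul, zero_mul] using
    sum_mul_le hrs hg (a := fun x => if θ < w x then 1 else 0) (fun x y hxy => by
      split_ifs with hx hy
      exacts [le_rfl, absurd (hx.trans_le hxy) hy, zero_le_one, le_rfl]) hf hs

end LocallyGreedy

/-- There is a distribution of valid rankings with `D[u] ≥ λ u` for all `u` iff for every
subset `X` of individuals, `max_{r ∈ 𝒮} ∑_{u ∈ X} V(r,u) ≥ ∑_{u ∈ X} λ u`. -/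
theorem exists_distrib_iff_subset_bound {U : Type*} [Fintype U] [DecidableEq U] {t : ℕ}
    (c : U → Fin t) (ub : Fin (Fintype.card U) → Fin t → ℕ)
    (f : Fin (Fintype.card U) → ℝ) (hf : Antitone f) (g : U → ℝ)
    (hS : ∃ r, ValidUB c ub r) (lam : U → ℝ) :
    (∃ D, IsDistribOn (ValidUB c ub) D ∧ ∀ u : U, lam u ≤ EV f g D u) ↔
      (∀ X : Finset U, ∑ u ∈ X, lam u ≤ Hfun (ValidUB c ub) f g X) := by
  refine ⟨fun ⟨D, hD, hlam⟩ X =>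
    (Finset.sum_le_sum fun u _ => hlam u).trans (sum_EV_le_Hfun f g hD X), fun hX => ?_⟩
  set K := EV.linearMap f g '' {p | IsDistribOn (ValidUB c ub) p}
  suffices lam ∈ lowerClosure K by
    obtain ⟨_, ⟨D, hD, rfl⟩, hle⟩ := mem_lowerClosure.1 this
    exact ⟨D, hD, hle⟩
  by_contra hlam
  obtain ⟨w, hw, hsep⟩ := exists_nonneg_weights_of_notMem_lowerClosure
    (isCompact_setOf_isDistribOn.image (EV.linearMap f g).continuous_of_finiteDimensional)
    (convex_setOf_isDistribOn.linear_image _) hlam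
  obtain ⟨rs, hrs, hg⟩ := exists_validUB_locallyGreedy hS w
  have hrsK : (fun u => f (rs u) - g u) ∈ K :=
    ⟨Pi.single rs 1, isDistribOn_single hrs, funext (EV_single f g rs)⟩
  refine (hsep _ hrsK).not_ge (Finset.sum_mul_le_sum_mul_of_forall_filter_lt _ (fun i _ => hw i)
    fun θ => (hX _).trans_eq (Hfun_eq_of_forall_le f g hrs fun s hs => ?_))
  simp only [Finset.sum_sub_distrib]
  exact sub_le_sub_right (hg.sum_filter_lt_le hrs hf hs θ) _
end

section
/- In the setting of valid rankings with only upper-bound constraints, the set function H : 2^𝒰 → ℝ defined by H(E) = max_{r∈𝒮} ∑_{u∈E} V(r,u) is submodular: for all subsets A, B ⊆ 𝒰, H(A) + H(B) ≥ H(A∪B) + H(A∩B). -/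
/-!
Write a ranking `r` through its prefixes `P_ℓ`, the individuals in its first `ℓ` places. By Abel
summation, `∑_{u ∈ E} f(r(u)) = |E| f(n) + ∑_{ℓ < n} (f(ℓ) - f(ℓ + 1)) |E ∩ P_ℓ|`, and the
weights are nonnegative because `f` is decreasing. With upper-bound constraints only, the greedy
ranking that fills each place with an admissible individual, preferring members of `E`, maximises
`|E ∩ P_ℓ|` for all `ℓ` at once, and this maximum is
`min_{i ≤ ℓ} ((ℓ - i) + ∑_k min(|E ∩ C_k|, cap_i^k))`, where `cap_i^k` bounds the class-`k` count
of a valid prefix of length `i`. Hence `H(E)` is a nonnegative combination of these maxima minus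
`∑_{u ∈ E} g(u)`, and each maximum is submodular in `E`: `min(·, cap)` is concave and `cap_i^k`
increases with `i`.
-/

open Finset

namespace UBRanking

variable {U : Type*} {t : ℕ}

section Counting

variable (c : U → Fin t)

def classCount (P : Finset U) (k : Fin t) : ℕ := #{u ∈ P | c u = k}

variable {c}

lemma classCount_mono {P Q : Finset U} (h : P ⊆ Q) (k : Fin t) :
    classCount c P k ≤ classCount c Q k :=
  card_le_card (filter_subset_filter _ h)

lemma sum_classCount (P : Finset U) : ∑ k, classCount c P k = #P :=
  (card_eq_sum_card_fiberwise fun u _ => mem_univ (c u)).symm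

lemma classCount_le_card (P : Finset U) (k : Fin t) : classCount c P k ≤ #P :=
  card_le_card (filter_subset _ _)

lemma classCount_union_add_inter [DecidableEq U] (A B : Finset U) (k : Fin t) :
    classCount c (A ∪ B) k + classCount c (A ∩ B) k = classCount c A k + classCount c B k := by
  simp only [classCount, filter_union, filter_inter_distrib]
  exact card_union_add_card_inter _ _

lemma classCount_insert [DecidableEq U] {P : Finset U} {u : U} (hu : u ∉ P) (k : Fin t) :
    classCount c (insert u P) k = classCount c P k + if c u = k then 1 else 0 := by
  unfold classCount
  rw [filter_insert]
  split_ifs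
  · exact card_insert_of_notMem (fun h => hu (mem_filter.1 h).1)
  · rfl

end Counting

variable [Fintype U]

def rankPrefix (r : U ≃ Fin (Fintype.card U)) (ℓ : ℕ) : Finset U := {u | (r u : ℕ) < ℓ}

section Prefix

variable {r : U ≃ Fin (Fintype.card U)}

@[simp]
lemma mem_rankPrefix {ℓ : ℕ} {u : U} : u ∈ rankPrefix r ℓ ↔ (r u : ℕ) < ℓ := by
  simp [rankPrefix]

lemma rankPrefix_mono : Monotone (rankPrefix r) :=
  fun _ _ h _ hu => mem_rankPrefix.2 (lt_of_lt_of_le (mem_rankPrefix.1 hu) h)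

lemma card_rankPrefix {ℓ : ℕ} (h : ℓ ≤ Fintype.card U) : #(rankPrefix r ℓ) = ℓ := by
  rw [card_equiv r (t := {i : Fin (Fintype.card U) | (i : ℕ) < ℓ}) (by simp),
    Fin.card_filter_val_lt, min_eq_right h]

lemma card_rankPrefix_sdiff {i ℓ : ℕ} (hi : i ≤ ℓ) (hℓ : ℓ ≤ Fintype.card U) [DecidableEq U] :
    #(rankPrefix r ℓ \ rankPrefix r i) = ℓ - i := by
  rw [card_sdiff_of_subset (rankPrefix_mono hi), card_rankPrefix hℓ,
    card_rankPrefix (hi.trans hℓ)]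

end Prefix

section Cap

variable (c : U → Fin t) (ub : Fin (Fintype.card U) → Fin t → ℕ)

/-- Since class counts grow along a ranking, the bound `ub i k` also constrains every shorter
prefix; `cap ℓ k` is the resulting bound on the class-`k` count of a prefix of length `ℓ`. -/
def cap (ℓ : ℕ) (k : Fin t) : ℕ :=
  ({i | ℓ ≤ (i : ℕ) + 1} : Finset (Fin (Fintype.card U))).fold min (min ℓ (classCount c univ k))
    (ub · k)

variable {c ub}

lemma le_cap_iff {m ℓ : ℕ} {k : Fin t} :
    m ≤ cap c ub ℓ k ↔
      m ≤ ℓ ∧ m ≤ classCount c univ k ∧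
        ∀ i : Fin (Fintype.card U), ℓ ≤ (i : ℕ) + 1 → m ≤ ub i k := by
  simp [cap, le_fold_min, and_assoc]

lemma cap_mono {ℓ ℓ' : ℕ} (h : ℓ ≤ ℓ') (k : Fin t) : cap c ub ℓ k ≤ cap c ub ℓ' k := by
  obtain ⟨h₁, h₂, h₃⟩ := le_cap_iff.1 (le_refl (cap c ub ℓ k))
  exact le_cap_iff.2 ⟨h₁.trans h, h₂, fun i hi => h₃ i (h.trans hi)⟩

lemma cap_zero (k : Fin t) : cap c ub 0 k = 0 :=
  Nat.le_zero.1 (le_cap_iff.1 le_rfl).1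

lemma cap_le_classCount_univ (ℓ : ℕ) (k : Fin t) : cap c ub ℓ k ≤ classCount c univ k :=
  (le_cap_iff.1 le_rfl).2.1

lemma classCount_rankPrefix_succ (r : U ≃ Fin (Fintype.card U)) (i : Fin (Fintype.card U))
    (k : Fin t) :
    #{u | c u = k ∧ r u ≤ i} = classCount c (rankPrefix r (i + 1)) k := by
  simp only [classCount, rankPrefix, filter_filter, Nat.lt_succ_iff, Fin.le_def, and_comm]

lemma validUB_iff {r : U ≃ Fin (Fintype.card U)} :
    ValidUB c ub r ↔
      ∀ ℓ ≤ Fintype.card U, ∀ k, classCount c (rankPrefix r ℓ) k ≤ cap c ub ℓ k := by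
  refine ⟨fun hr ℓ hℓ k => le_cap_iff.2 ⟨?_, classCount_mono (subset_univ _) k, fun i hi => ?_⟩,
    fun hr i k => ?_⟩
  · exact (classCount_le_card _ k).trans (card_rankPrefix hℓ).le
  · calc classCount c (rankPrefix r ℓ) k
        ≤ classCount c (rankPrefix r (i + 1)) k := classCount_mono (rankPrefix_mono hi) k
      _ ≤ ub i k := classCount_rankPrefix_succ r i k ▸ hr i k
  · rw [classCount_rankPrefix_succ]
    exact (le_cap_iff.1 (hr _ i.isLt k)).2.2 i le_rfl

lemma le_sum_cap {r : U ≃ Fin (Fintype.card U)} (hr : ValidUB c ub r) {ℓ : ℕ}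
    (hℓ : ℓ ≤ Fintype.card U) : ℓ ≤ ∑ k, cap c ub ℓ k := by
  calc ℓ = ∑ k, classCount c (rankPrefix r ℓ) k := by rw [sum_classCount, card_rankPrefix hℓ]
    _ ≤ ∑ k, cap c ub ℓ k := sum_le_sum fun k _ => validUB_iff.1 hr ℓ hℓ k

end Cap

section Cover

variable (c : U → Fin t) (ub : Fin (Fintype.card U) → Fin t → ℕ)

/-- Splitting a prefix of length `ℓ` at length `i ≤ ℓ`: the first `i` places hold at most
`min (classCount E k) (cap i k)` elements of `E` of each class, the remaining `ℓ - i` places at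
most `ℓ - i` elements. -/
def coverBound (E : Finset U) (ℓ i : ℕ) : ℕ :=
  (ℓ - i) + ∑ k, min (classCount c E k) (cap c ub i k)

/-- The largest number of elements of `E` that a valid ranking can place among its first `ℓ`
positions. -/
def maxCover (E : Finset U) (ℓ : ℕ) : ℕ :=
  (range (ℓ + 1)).inf' nonempty_range_add_one (coverBound c ub E ℓ)

variable {c ub}

lemma maxCover_le_coverBound (E : Finset U) {ℓ i : ℕ} (hi : i ≤ ℓ) :
    maxCover c ub E ℓ ≤ coverBound c ub E ℓ i :=
  inf'_le _ (mem_range.2 (Nat.lt_succ_of_le hi))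

lemma exists_maxCover_eq (E : Finset U) (ℓ : ℕ) :
    ∃ i ≤ ℓ, maxCover c ub E ℓ = coverBound c ub E ℓ i := by
  obtain ⟨i, hi, h⟩ := exists_mem_eq_inf' nonempty_range_add_one (coverBound c ub E ℓ)
  exact ⟨i, Nat.lt_succ_iff.1 (mem_range.1 hi), h⟩

lemma maxCover_zero (E : Finset U) : maxCover c ub E 0 = 0 := by
  refine Nat.le_zero.1 ((maxCover_le_coverBound E le_rfl).trans_eq ?_)
  simp [coverBound, cap_zero]

lemma maxCover_succ_le (E : Finset U) (ℓ : ℕ) :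
    maxCover c ub E (ℓ + 1) ≤ maxCover c ub E ℓ + 1 := by
  obtain ⟨i, hi, h⟩ := exists_maxCover_eq (c := c) (ub := ub) E ℓ
  calc maxCover c ub E (ℓ + 1) ≤ coverBound c ub E (ℓ + 1) i :=
        maxCover_le_coverBound E (Nat.le_succ_of_le hi)
    _ = maxCover c ub E ℓ + 1 := by rw [h, coverBound, coverBound]; omega

lemma card_inter_rankPrefix_le_coverBound {r : U ≃ Fin (Fintype.card U)} (hr : ValidUB c ub r)
    (X : Finset U) {ℓ i : ℕ} (hi : i ≤ ℓ) (hℓ : ℓ ≤ Fintype.card U) [DecidableEq U] :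
    #(X ∩ rankPrefix r ℓ) ≤ coverBound c ub X ℓ i := by
  have hsplit :
      X ∩ rankPrefix r ℓ ⊆ (X ∩ rankPrefix r i) ∪ (rankPrefix r ℓ \ rankPrefix r i) := by
    intro u hu
    by_cases h : u ∈ rankPrefix r i <;> simp_all
  have hhead : #(X ∩ rankPrefix r i) ≤ ∑ k, min (classCount c X k) (cap c ub i k) := by
    rw [← sum_classCount]
    refine sum_le_sum fun k _ => le_min (classCount_mono inter_subset_left k) ?_
    exact (classCount_mono inter_subset_right k).trans
      (validUB_iff.1 hr i (hi.trans hℓ) k)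
  calc #(X ∩ rankPrefix r ℓ)
      ≤ #(X ∩ rankPrefix r i) + #(rankPrefix r ℓ \ rankPrefix r i) :=
        (card_le_card hsplit).trans (card_union_le _ _)
    _ ≤ coverBound c ub X ℓ i := by
        rw [card_rankPrefix_sdiff hi hℓ, coverBound]; omega

lemma card_inter_rankPrefix_le_maxCover {r : U ≃ Fin (Fintype.card U)} (hr : ValidUB c ub r)
    (X : Finset U) {ℓ : ℕ} (hℓ : ℓ ≤ Fintype.card U) [DecidableEq U] :
    #(X ∩ rankPrefix r ℓ) ≤ maxCover c ub X ℓ :=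
  le_inf' _ _ fun _ hi =>
    card_inter_rankPrefix_le_coverBound hr X (Nat.lt_succ_iff.1 (mem_range.1 hi)) hℓ

lemma coverBound_union_add_inter_le [DecidableEq U] (A B : Finset U) (ℓ : ℕ) {i j : ℕ}
    (hij : i ≤ j) :
    coverBound c ub (A ∪ B) ℓ i + coverBound c ub (A ∩ B) ℓ j ≤
      coverBound c ub A ℓ i + coverBound c ub B ℓ j := by
  have hk : ∀ k, min (classCount c (A ∪ B) k) (cap c ub i k) +
      min (classCount c (A ∩ B) k) (cap c ub j k) ≤
      min (classCount c A k) (cap c ub i k) + min (classCount c B k) (cap c ub j k) := by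
    intro k
    have := classCount_union_add_inter (c := c) A B k
    have := classCount_mono (c := c) (inter_subset_left (s₁ := A) (s₂ := B)) k
    have := classCount_mono (c := c) (inter_subset_right (s₁ := A) (s₂ := B)) k
    have := cap_mono (c := c) (ub := ub) hij k
    omega
  have := sum_le_sum fun k (_ : k ∈ univ) => hk k
  simp only [sum_add_distrib] at this
  simp only [coverBound]
  omega

lemma maxCover_union_add_inter_le [DecidableEq U] (A B : Finset U) (ℓ : ℕ) :
    maxCover c ub (A ∪ B) ℓ + maxCover c ub (A ∩ B) ℓ ≤
      maxCover c ub A ℓ + maxCover c ub B ℓ := by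
  obtain ⟨i, hi, hA⟩ := exists_maxCover_eq (c := c) (ub := ub) A ℓ
  obtain ⟨j, hj, hB⟩ := exists_maxCover_eq (c := c) (ub := ub) B ℓ
  rw [hA, hB]
  rcases le_total i j with hij | hji
  · exact (add_le_add (maxCover_le_coverBound _ hi) (maxCover_le_coverBound _ hj)).trans
      (coverBound_union_add_inter_le A B ℓ hij)
  · rw [add_comm (coverBound c ub A ℓ i), union_comm, inter_comm]
    exact (add_le_add (maxCover_le_coverBound _ hj) (maxCover_le_coverBound _ hi)).trans
      (coverBound_union_add_inter_le B A ℓ hji)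

end Cover

section Chain

variable [DecidableEq U]

lemma exists_rankPrefix_eq {S : ℕ → Finset U} (hS : Monotone S)
    (hcard : ∀ ℓ ≤ Fintype.card U, #(S ℓ) = ℓ) :
    ∃ r : U ≃ Fin (Fintype.card U), ∀ ℓ ≤ Fintype.card U, rankPrefix r ℓ = S ℓ := by
  have hS0 : S 0 = ∅ := card_eq_zero.1 (hcard 0 (Nat.zero_le _))
  have huniv : S (Fintype.card U) = univ := eq_univ_of_card _ (hcard _ le_rfl)
  have hex : ∀ u, ∃ s, u ∈ S (s + 1) := fun u =>
    ⟨Fintype.card U, hS (Nat.le_succ _) (huniv ▸ mem_univ u)⟩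
  have hmem : ∀ u ℓ, u ∈ S ℓ ↔ Nat.find (hex u) < ℓ := by
    intro u ℓ
    refine ⟨fun hu => ?_, fun h => hS h (Nat.find_spec (hex u))⟩
    obtain _ | ℓ := ℓ
    · simp [hS0] at hu
    · exact Nat.lt_succ_of_le (Nat.find_min' (hex u) hu)
  have hlt : ∀ u, Nat.find (hex u) < Fintype.card U := fun u =>
    (hmem u _).1 (huniv ▸ mem_univ u)
  let pos : U → Fin (Fintype.card U) := fun u => ⟨Nat.find (hex u), hlt u⟩
  have hinj : Function.Injective pos := by
    intro u v huv
    have hv : Nat.find (hex v) = Nat.find (hex u) := (Fin.val_eq_of_eq huv).symm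
    have hstep : #(S (Nat.find (hex u) + 1) \ S (Nat.find (hex u))) ≤ 1 := by
      rw [card_sdiff_of_subset (hS (Nat.le_succ _)), hcard _ (hlt u), hcard _ (hlt u).le]
      omega
    refine card_le_one.1 hstep u ?_ v ?_ <;> rw [mem_sdiff, hmem, hmem] <;> omega
  refine ⟨Equiv.ofBijective pos ((Fintype.bijective_iff_injective_and_card pos).2
    ⟨hinj, (Fintype.card_fin _).symm⟩), fun ℓ _ => ?_⟩
  ext u
  rw [mem_rankPrefix, hmem]
  rfl

lemma exists_forall_rankPrefix (P : Finset U → Prop) (hP : P ∅)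
    (hext : ∀ S, #S < Fintype.card U → P S → ∃ u ∉ S, P (insert u S)) :
    ∃ r : U ≃ Fin (Fintype.card U), ∀ ℓ ≤ Fintype.card U, P (rankPrefix r ℓ) := by
  -- choosing `T = S` where `hext` does not apply makes the iterated chain monotone everywhere
  have hnext :
      ∀ S : Finset U, ∃ T, S ⊆ T ∧ (#S < Fintype.card U → P S → #T = #S + 1 ∧ P T) := by
    intro S
    by_cases h : #S < Fintype.card U ∧ P S
    · obtain ⟨u, hu, hPu⟩ := hext S h.1 h.2
      exact ⟨insert u S, subset_insert u S, fun _ _ => ⟨card_insert_of_notMem hu, hPu⟩⟩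
    · exact ⟨S, subset_rfl, fun hS hPS => absurd ⟨hS, hPS⟩ h⟩
  choose next hsub hnext using hnext
  let S : ℕ → Finset U := fun ℓ => next^[ℓ] ∅
  have hSsucc : ∀ ℓ, S (ℓ + 1) = next (S ℓ) := fun ℓ => Function.iterate_succ_apply' _ _ _
  have hinv : ∀ ℓ ≤ Fintype.card U, #(S ℓ) = ℓ ∧ P (S ℓ) := by
    intro ℓ hℓ
    induction ℓ with
    | zero => exact ⟨card_empty, hP⟩
    | succ ℓ ih =>
      obtain ⟨hcard, hPℓ⟩ := ih (Nat.le_of_succ_le hℓ)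
      obtain ⟨hcard', hP'⟩ := hnext (S ℓ) (by omega) hPℓ
      rw [hSsucc]
      exact ⟨by omega, hP'⟩
  obtain ⟨r, hr⟩ := exists_rankPrefix_eq (monotone_nat_of_le_succ fun ℓ => hSsucc ℓ ▸ hsub _)
    fun ℓ hℓ => (hinv ℓ hℓ).1
  exact ⟨r, fun ℓ hℓ => hr ℓ hℓ ▸ (hinv ℓ hℓ).2⟩

end Chain

section Greedy

variable {c : U → Fin t} {ub : Fin (Fintype.card U) → Fin t → ℕ}

lemma exists_classCount_lt_cap {r₀ : U ≃ Fin (Fintype.card U)} (hr₀ : ValidUB c ub r₀)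
    {S : Finset U} (hS : #S < Fintype.card U) :
    ∃ u ∉ S, classCount c S (c u) < cap c ub (#S + 1) (c u) := by
  have hsum : ∑ k, classCount c S k < ∑ k, cap c ub (#S + 1) k := by
    rw [sum_classCount]
    exact Nat.lt_of_lt_of_le (Nat.lt_succ_self _) (le_sum_cap hr₀ hS)
  obtain ⟨k, -, hk⟩ := exists_lt_of_sum_lt hsum
  obtain ⟨u, hu, huS⟩ := exists_mem_notMem_of_card_lt_card
    (hk.trans_le (cap_le_classCount_univ _ k))
  obtain ⟨-, rfl⟩ := mem_filter.1 hu
  exact ⟨u, fun h => huS (mem_filter.2 ⟨h, rfl⟩), hk⟩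

variable [DecidableEq U]

lemma classCount_insert_le_cap {S : Finset U} {u : U} (hu : u ∉ S)
    (hS : ∀ k, classCount c S k ≤ cap c ub #S k)
    (huc : classCount c S (c u) < cap c ub (#S + 1) (c u)) (k : Fin t) :
    classCount c (insert u S) k ≤ cap c ub #(insert u S) k := by
  rw [classCount_insert hu, card_insert_of_notMem hu]
  split_ifs with h
  · exact h ▸ huc
  · exact (hS k).trans (cap_mono (Nat.le_succ _) k)

variable (c ub)

/-- Invariant of the greedy construction of an optimal ranking for `E`, which within each class
places the elements of `E` first. -/
structure GreedyInv (E S : Finset U) : Prop where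
  classCount_le_cap : ∀ k, classCount c S k ≤ cap c ub #S k
  classCount_inter : ∀ k, classCount c (S ∩ E) k = min (classCount c S k) (classCount c E k)
  maxCover_le : maxCover c ub E #S ≤ #(S ∩ E)

variable {c ub}

lemma greedyInv_empty (E : Finset U) : GreedyInv c ub E ∅ where
  classCount_le_cap k := by simp [classCount]
  classCount_inter k := by simp [classCount]
  maxCover_le := by simp [maxCover_zero]

lemma GreedyInv.insert_of_mem {E S : Finset U} (hS : GreedyInv c ub E S) {u : U} (huE : u ∈ E)
    (hu : u ∉ S) (huc : classCount c S (c u) < cap c ub (#S + 1) (c u)) :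
    GreedyInv c ub E (insert u S) := by
  have huSE : u ∉ S ∩ E := fun h => hu (mem_inter.1 h).1
  refine ⟨classCount_insert_le_cap hu hS.classCount_le_cap huc, fun k => ?_, ?_⟩
  · have hE := classCount_mono (c := c) (insert_subset huE (inter_subset_right (s₁ := S))) k
    have := hS.classCount_inter k
    rw [classCount_insert huSE] at hE
    rw [insert_inter_of_mem huE, classCount_insert huSE, classCount_insert hu]
    split_ifs at hE ⊢ <;> omega
  · rw [insert_inter_of_mem huE, card_insert_of_notMem hu, card_insert_of_notMem huSE]
    exact (maxCover_succ_le E _).trans (Nat.succ_le_succ hS.maxCover_le)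

/-- If no element of `E` can be placed next, then in each class either all of `E` is placed
already or the cap is exhausted, by elements of `E` first. -/
lemma GreedyInv.min_cap_le_classCount_inter {E S : Finset U} (hS : GreedyInv c ub E S)
    (hE : ∀ v ∈ E, v ∉ S → cap c ub (#S + 1) (c v) ≤ classCount c S (c v)) (k : Fin t) :
    min (classCount c E k) (cap c ub (#S + 1) k) ≤ classCount c (S ∩ E) k := by
  by_cases h : ∃ v ∈ E, v ∉ S ∧ c v = k
  · obtain ⟨v, hvE, hvS, rfl⟩ := h
    have := hE v hvE hvS
    have := hS.classCount_inter (c v)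
    omega
  · push Not at h
    refine (min_le_left _ _).trans (card_le_card fun v hv => ?_)
    obtain ⟨hvE, rfl⟩ := mem_filter.1 hv
    by_contra hvS
    exact h v hvE (fun hv' => hvS (mem_filter.2 ⟨mem_inter.2 ⟨hv', hvE⟩, rfl⟩)) rfl

lemma GreedyInv.insert_of_forall_notMem {E S : Finset U} (hS : GreedyInv c ub E S)
    (hE : ∀ v ∈ E, v ∉ S → cap c ub (#S + 1) (c v) ≤ classCount c S (c v)) {u : U}
    (hu : u ∉ S) (huc : classCount c S (c u) < cap c ub (#S + 1) (c u)) :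
    GreedyInv c ub E (insert u S) := by
  have huE : u ∉ E := fun h => (hE u h hu).not_gt huc
  have hmin := hS.min_cap_le_classCount_inter hE
  refine ⟨classCount_insert_le_cap hu hS.classCount_le_cap huc, fun k => ?_, ?_⟩
  · have := hS.classCount_inter k
    have := hmin k
    rw [insert_inter_of_notMem huE, classCount_insert hu]
    split_ifs with h
    · subst h; omega
    · omega
  · rw [insert_inter_of_notMem huE, card_insert_of_notMem hu]
    calc maxCover c ub E (#S + 1) ≤ coverBound c ub E (#S + 1) (#S + 1) :=
          maxCover_le_coverBound E le_rfl
      _ ≤ ∑ k, classCount c (S ∩ E) k := by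
          simpa [coverBound] using sum_le_sum fun k (_ : k ∈ univ) => hmin k
      _ = #(S ∩ E) := sum_classCount _

lemma GreedyInv.exists_insert {r₀ : U ≃ Fin (Fintype.card U)} (hr₀ : ValidUB c ub r₀)
    {E S : Finset U} (hS : GreedyInv c ub E S) (hcard : #S < Fintype.card U) :
    ∃ u ∉ S, GreedyInv c ub E (insert u S) := by
  by_cases hE : ∃ u ∈ E, u ∉ S ∧ classCount c S (c u) < cap c ub (#S + 1) (c u)
  · obtain ⟨u, huE, hu, huc⟩ := hE
    exact ⟨u, hu, hS.insert_of_mem huE hu huc⟩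
  · push Not at hE
    obtain ⟨u, hu, huc⟩ := exists_classCount_lt_cap hr₀ hcard
    exact ⟨u, hu, hS.insert_of_forall_notMem hE hu huc⟩

lemma exists_validUB_maxCover_le {r₀ : U ≃ Fin (Fintype.card U)} (hr₀ : ValidUB c ub r₀)
    (E : Finset U) :
    ∃ r, ValidUB c ub r ∧ ∀ ℓ ≤ Fintype.card U, maxCover c ub E ℓ ≤ #(E ∩ rankPrefix r ℓ) := by
  obtain ⟨r, hr⟩ := exists_forall_rankPrefix (GreedyInv c ub E) (greedyInv_empty E)
    fun S hcard hS => hS.exists_insert hr₀ hcard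
  refine ⟨r, validUB_iff.2 fun ℓ hℓ k => ?_, fun ℓ hℓ => ?_⟩
  · simpa [card_rankPrefix hℓ] using (hr ℓ hℓ).classCount_le_cap k
  · simpa [card_rankPrefix hℓ, inter_comm] using (hr ℓ hℓ).maxCover_le

end Greedy

section Value

def clampExtend {n : ℕ} (f : Fin n → ℝ) (j : ℕ) : ℝ :=
  if h : n = 0 then 0 else f ⟨min j (n - 1), by omega⟩

lemma clampExtend_coe {n : ℕ} (f : Fin n → ℝ) (i : Fin n) : clampExtend f i = f i := by
  have := i.isLt
  rw [clampExtend, dif_neg (by omega)]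
  congr
  omega

lemma antitone_clampExtend {n : ℕ} {f : Fin n → ℝ} (hf : Antitone f) :
    Antitone (clampExtend f) := by
  intro i j hij
  unfold UBRanking.clampExtend
  split_ifs
  · rfl
  · exact hf (Fin.mk_le_mk.2 (by omega))

variable [DecidableEq U]

lemma sum_comp_eq_sum_card_inter_rankPrefix_mul (F : ℕ → ℝ) (r : U ≃ Fin (Fintype.card U))
    (X : Finset U) :
    ∑ u ∈ X, F (r u) = #X * F (Fintype.card U) +
      ∑ j ∈ range (Fintype.card U), #(X ∩ rankPrefix r (j + 1)) * (F j - F (j + 1)) := by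
  have hu : ∀ u, F (r u) = F (Fintype.card U) + ∑ j ∈ range (Fintype.card U),
      if u ∈ rankPrefix r (j + 1) then F j - F (j + 1) else 0 := by
    intro u
    have hset : {j ∈ range (Fintype.card U) | u ∈ rankPrefix r (j + 1)} =
        Ico (r u : ℕ) (Fintype.card U) := by
      ext j
      simp only [mem_filter, mem_range, mem_rankPrefix, mem_Ico]
      omega
    rw [← sum_filter, hset, sum_Ico_eq_sub _ (r u).isLt.le, sum_range_sub', sum_range_sub']
    ring
  simp only [hu, sum_add_distrib, sum_const, nsmul_eq_mul]
  rw [sum_comm]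
  simp only [sum_ite_mem, sum_const, nsmul_eq_mul]

variable (c : U → Fin t) (ub : Fin (Fintype.card U) → Fin t → ℕ) (f : Fin (Fintype.card U) → ℝ)
  (g : U → ℝ)

def optValue (X : Finset U) : ℝ :=
  #X * clampExtend f (Fintype.card U) +
    ∑ j ∈ range (Fintype.card U),
      (maxCover c ub X (j + 1) : ℝ) * (clampExtend f j - clampExtend f (j + 1)) -
    ∑ u ∈ X, g u

variable {c ub f g}

lemma sum_value_eq (r : U ≃ Fin (Fintype.card U)) (X : Finset U) :
    ∑ u ∈ X, (f (r u) - g u) =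
      #X * clampExtend f (Fintype.card U) +
        ∑ j ∈ range (Fintype.card U),
          (#(X ∩ rankPrefix r (j + 1)) : ℝ) * (clampExtend f j - clampExtend f (j + 1)) -
        ∑ u ∈ X, g u := by
  rw [sum_sub_distrib, ← sum_comp_eq_sum_card_inter_rankPrefix_mul]
  simp only [clampExtend_coe]

lemma sum_value_le_optValue (hf : Antitone f) {r : U ≃ Fin (Fintype.card U)}
    (hr : ValidUB c ub r) (X : Finset U) :
    ∑ u ∈ X, (f (r u) - g u) ≤ optValue c ub f g X := by
  rw [sum_value_eq, optValue]
  gcongr with j hj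
  · exact sub_nonneg.2 (antitone_clampExtend hf (Nat.le_succ j))
  · exact_mod_cast card_inter_rankPrefix_le_maxCover hr X (mem_range.1 hj)

lemma optValue_le_sum_value (hf : Antitone f) {r : U ≃ Fin (Fintype.card U)} {X : Finset U}
    (hX : ∀ ℓ ≤ Fintype.card U, maxCover c ub X ℓ ≤ #(X ∩ rankPrefix r ℓ)) :
    optValue c ub f g X ≤ ∑ u ∈ X, (f (r u) - g u) := by
  rw [sum_value_eq, optValue]
  gcongr with j hj
  · exact sub_nonneg.2 (antitone_clampExtend hf (Nat.le_succ j))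
  · exact_mod_cast hX (j + 1) (mem_range.1 hj)

theorem Hfun_eq_optValue (hf : Antitone f) (hS : ∃ r, ValidUB c ub r) (X : Finset U) :
    Hfun (ValidUB c ub) f g X = optValue c ub f g X := by
  obtain ⟨r₀, hr₀⟩ := hS
  obtain ⟨r, hr, hX⟩ := exists_validUB_maxCover_le hr₀ X
  refine IsGreatest.csSup_eq ⟨⟨r, hr, le_antisymm (sum_value_le_optValue hf hr X)
    (optValue_le_sum_value hf hX)⟩, ?_⟩
  rintro _ ⟨r', hr', rfl⟩
  exact sum_value_le_optValue hf hr' X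

theorem optValue_union_add_inter_le (hf : Antitone f) (A B : Finset U) :
    optValue c ub f g (A ∪ B) + optValue c ub f g (A ∩ B) ≤
      optValue c ub f g A + optValue c ub f g B := by
  have hcard : (#(A ∪ B) : ℝ) + #(A ∩ B) = #A + #B := by
    exact_mod_cast card_union_add_card_inter A B
  have hcover : ∑ j ∈ range (Fintype.card U),
      ((maxCover c ub (A ∪ B) (j + 1) : ℝ) + maxCover c ub (A ∩ B) (j + 1)) *
        (clampExtend f j - clampExtend f (j + 1)) ≤
      ∑ j ∈ range (Fintype.card U),
      ((maxCover c ub A (j + 1) : ℝ) + maxCover c ub B (j + 1)) *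
        (clampExtend f j - clampExtend f (j + 1)) := by
    refine sum_le_sum fun j _ => mul_le_mul_of_nonneg_right ?_
      (sub_nonneg.2 (antitone_clampExtend hf (Nat.le_succ j)))
    exact_mod_cast maxCover_union_add_inter_le A B (j + 1)
  simp only [add_mul, sum_add_distrib] at hcover
  simp only [optValue]
  linear_combination clampExtend f (Fintype.card U) * hcard + hcover -
    sum_union_inter (f := g) (s₁ := A) (s₂ := B)

end Value

end UBRanking

/-- The set function `E ↦ max_{r ∈ 𝒮} ∑_{u ∈ E} V(r,u)` is submodular when the set of valid
rankings is defined by upper-bound constraints only. -/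
theorem Hfun_submodular {U : Type*} [Fintype U] [DecidableEq U] {t : ℕ}
    (c : U → Fin t) (ub : Fin (Fintype.card U) → Fin t → ℕ)
    (f : Fin (Fintype.card U) → ℝ) (hf : Antitone f) (g : U → ℝ)
    (hS : ∃ r, ValidUB c ub r) :
    ∀ A B : Finset U,
      Hfun (ValidUB c ub) f g (A ∪ B) + Hfun (ValidUB c ub) f g (A ∩ B) ≤
      Hfun (ValidUB c ub) f g A + Hfun (ValidUB c ub) f g B := by
  intro A B
  simp only [UBRanking.Hfun_eq_optValue hf hS]
  exact UBRanking.optValue_union_add_inter_le hf A B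
end

section
/- Let 𝒰 be a finite set and J : 2^𝒰 → ℝ a submodular set function (J(A) + J(B) ≥ J(A∪B) + J(A∩B) for all A, B) with J(∅) = 0. If X and Y are nonempty subsets of 𝒰 both achieving the minimum of J(Z)/|Z| over nonempty subsets Z ⊆ 𝒰, then X ∪ Y also achieves this minimum. -/
/-!
Let `m = J X / #X` be the minimal ratio. Since the cardinality is modular, `f Z = J Z - m * #Z`
is again submodular; it is nonnegative (using `J ∅ = 0` for `Z = ∅`) and vanishes on every
minimizer. Submodularity then gives `f (X ∪ Y) ≤ f X + f Y - f (X ∩ Y) ≤ 0`, i.e.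
`J (X ∪ Y) / #(X ∪ Y) ≤ m`.
-/

open Finset

section

variable {U : Type*}

theorem nonpos_union_of_submodular_of_nonneg [DecidableEq U] {f : Finset U → ℝ}
    (hsub : ∀ A B : Finset U, f (A ∪ B) + f (A ∩ B) ≤ f A + f B) (hnonneg : ∀ Z, 0 ≤ f Z)
    {X Y : Finset U} (hX : f X ≤ 0) (hY : f Y ≤ 0) : f (X ∪ Y) ≤ 0 := by
  linarith [hsub X Y, hnonneg (X ∩ Y)]

theorem submodular_sub_mul_card [DecidableEq U] {J : Finset U → ℝ}
    (hsub : ∀ A B : Finset U, J (A ∪ B) + J (A ∩ B) ≤ J A + J B) (m : ℝ) (A B : Finset U) :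
    J (A ∪ B) - m * #(A ∪ B) + (J (A ∩ B) - m * #(A ∩ B)) ≤ J A - m * #A + (J B - m * #B) := by
  have hcard : (#(A ∪ B) : ℝ) + #(A ∩ B) = #A + #B := by
    exact_mod_cast card_union_add_card_inter A B
  linear_combination hsub A B - m * hcard

theorem mul_card_le_of_le_div {J : Finset U → ℝ} (h0 : J ∅ = 0) {m : ℝ}
    (hm : ∀ Z : Finset U, Z.Nonempty → m ≤ J Z / #Z) (Z : Finset U) : m * #Z ≤ J Z := by
  obtain rfl | hZ := Z.eq_empty_or_nonempty
  · simp [h0]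
  · exact (le_div_iff₀ (by exact_mod_cast hZ.card_pos)).1 (hm Z hZ)

end

theorem union_minimizes_ratio_general {U : Type*} [DecidableEq U]
    (J : Finset U → ℝ)
    (hsub : ∀ A B : Finset U, J (A ∪ B) + J (A ∩ B) ≤ J A + J B)
    (h0 : J ∅ = 0)
    (X Y : Finset U) (hX : X.Nonempty) (hY : Y.Nonempty)
    (hXmin : ∀ Z : Finset U, Z.Nonempty → J X / (X.card : ℝ) ≤ J Z / (Z.card : ℝ))
    (hYmin : ∀ Z : Finset U, Z.Nonempty → J Y / (Y.card : ℝ) ≤ J Z / (Z.card : ℝ)) :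
    ∀ Z : Finset U, Z.Nonempty →
      J (X ∪ Y) / ((X ∪ Y).card : ℝ) ≤ J Z / (Z.card : ℝ) := by
  intro Z hZ
  set m := J X / #X
  have hYm : J Y / #Y = m := le_antisymm (hYmin X hX) (hXmin Y hY)
  have hJX : J X - m * #X ≤ 0 := by
    rw [div_mul_cancel₀ _ (Nat.cast_ne_zero.2 hX.card_pos.ne'), sub_self]
  have hJY : J Y - m * #Y ≤ 0 := by
    rw [← hYm, div_mul_cancel₀ _ (Nat.cast_ne_zero.2 hY.card_pos.ne'), sub_self]
  have hJXY : J (X ∪ Y) - m * #(X ∪ Y) ≤ 0 :=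
    nonpos_union_of_submodular_of_nonneg (f := fun W ↦ J W - m * #W)
      (submodular_sub_mul_card hsub m)
      (fun W ↦ sub_nonneg.2 (mul_card_le_of_le_div h0 hXmin W)) hJX hJY
  calc J (X ∪ Y) / #(X ∪ Y)
      ≤ m := (div_le_iff₀ (by exact_mod_cast (hX.mono subset_union_left).card_pos)).2 (by linarith)
    _ ≤ J Z / #Z := hXmin Z hZ

/-- If `X` and `Y` are nonempty sets both minimizing `J(Z)/|Z|` over nonempty subsets `Z`
of a finite set, where `J` is submodular with `J ∅ = 0`, then `X ∪ Y` also minimizes it. -/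
theorem union_minimizes_ratio {U : Type*} [Fintype U] [DecidableEq U]
    (J : Finset U → ℝ)
    (hsub : ∀ A B : Finset U, J (A ∪ B) + J (A ∩ B) ≤ J A + J B)
    (h0 : J ∅ = 0)
    (X Y : Finset U) (hX : X.Nonempty) (hY : Y.Nonempty)
    (hXmin : ∀ Z : Finset U, Z.Nonempty → J X / (X.card : ℝ) ≤ J Z / (Z.card : ℝ))
    (hYmin : ∀ Z : Finset U, Z.Nonempty → J Y / (Y.card : ℝ) ≤ J Z / (Z.card : ℝ)) :
    ∀ Z : Finset U, Z.Nonempty →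
      J (X ∪ Y) / ((X ∪ Y).card : ℝ) ≤ J Z / (Z.card : ℝ) :=
  union_minimizes_ratio_general J hsub h0 X Y hX hY hXmin hYmin
end

section
/- Let 𝒰 be a nonempty finite set, 𝒮 a nonempty finite set, and V : 𝒮 × 𝒰 → ℝ. Suppose r' ∈ 𝒮 satisfies, for every real M > 0 and every r ∈ 𝒮, ∑_{u∈𝒰} (−exp(−M·V(r',u))) ≥ ∑_{u∈𝒰} (−exp(−M·V(r,u))). Then r' maximizes the minimum value: for every r ∈ 𝒮, min_{u∈𝒰} V(r',u) ≥ min_{u∈𝒰} V(r,u). -/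
/-!
For large `M` the sum `∑ᵤ exp (-M · f u)` is dominated by its largest term: it lies between
`exp (-M · min f)` and `|U| · exp (-M · min f)`. If the minimum of `V r'` were smaller than that
of `V r` by `c > 0`, comparing the sums for `r'` and `r` would give `exp (M c) ≤ |U|` for every
`M > 0`, which fails for `M = |U| / c` since `exp x > x`.
-/

open Finset Real

namespace Finset

variable {ι : Type*} (s : Finset ι) (hs : s.Nonempty) (f : ι → ℝ)

theorem exp_neg_mul_inf'_le_sum_exp (M : ℝ) :
    exp (-M * s.inf' hs f) ≤ ∑ u ∈ s, exp (-M * f u) := by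
  obtain ⟨u, hu, hfu⟩ := s.exists_mem_eq_inf' hs f
  rw [hfu]
  exact single_le_sum (f := fun u => exp (-M * f u)) (fun _ _ => (exp_pos _).le) hu

theorem sum_exp_neg_mul_le_card_mul {M : ℝ} (hM : 0 ≤ M) :
    ∑ u ∈ s, exp (-M * f u) ≤ #s * exp (-M * s.inf' hs f) := by
  rw [← nsmul_eq_mul]
  refine sum_le_card_nsmul s _ _ fun u hu => exp_le_exp.mpr ?_
  have := s.inf'_le f hu
  nlinarith

theorem inf'_le_inf'_of_sum_exp_neg_mul_le {κ : Type*} (t : Finset κ) (ht : t.Nonempty)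
    (g : κ → ℝ) (h : ∀ M : ℝ, 0 < M → ∑ u ∈ t, exp (-M * g u) ≤ ∑ u ∈ s, exp (-M * f u)) :
    s.inf' hs f ≤ t.inf' ht g := by
  by_contra! hlt
  set c := s.inf' hs f - t.inf' ht g
  have hc : 0 < c := sub_pos.mpr hlt
  have hcard : (0 : ℝ) < #s := by exact_mod_cast hs.card_pos
  set M := (#s : ℝ) / c
  have hM : 0 < M := div_pos hcard hc
  have hbound : exp (-M * t.inf' ht g) ≤ #s * exp (-M * s.inf' hs f) :=
    (t.exp_neg_mul_inf'_le_sum_exp ht g M).trans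
      ((h M hM).trans (s.sum_exp_neg_mul_le_card_mul hs f hM.le))
  have hexp : exp (M * c) ≤ #s := by
    rw [show M * c = -M * t.inf' ht g - -M * s.inf' hs f by ring, exp_sub,
      div_le_iff₀ (exp_pos _)]
    exact hbound
  rw [show M * c = #s from div_mul_cancel₀ _ hc.ne'] at hexp
  linarith [add_one_le_exp (#s : ℝ)]

end Finset

theorem softmin_maximizer_maximizes_min_general {S U : Type*} [Fintype U]
    [Nonempty U] (V : S → U → ℝ) (r' : S)
    (h : ∀ M : ℝ, 0 < M → ∀ r : S,
      ∑ u : U, -Real.exp (-M * V r u) ≤ ∑ u : U, -Real.exp (-M * V r' u)) :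
    ∀ r : S,
      Finset.univ.inf' Finset.univ_nonempty (V r) ≤
        Finset.univ.inf' Finset.univ_nonempty (V r') := fun r =>
  univ.inf'_le_inf'_of_sum_exp_neg_mul_le _ (V r) univ _ (V r') fun M hM => by
    simpa only [sum_neg_distrib, neg_le_neg_iff] using h M hM r

/-- If `r'` maximizes `∑_u -exp(-M · V(r,u))` over `r ∈ 𝒮` for every `M > 0`, then `r'`
maximizes the minimum value `min_u V(r,u)`. -/
theorem softmin_maximizer_maximizes_min {S U : Type*} [Fintype S] [Fintype U]
    [Nonempty S] [Nonempty U] (V : S → U → ℝ) (r' : S)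
    (h : ∀ M : ℝ, 0 < M → ∀ r : S,
      ∑ u : U, -Real.exp (-M * V r u) ≤ ∑ u : U, -Real.exp (-M * V r' u)) :
    ∀ r : S,
      Finset.univ.inf' Finset.univ_nonempty (V r) ≤
        Finset.univ.inf' Finset.univ_nonempty (V r') :=
  softmin_maximizer_maximizes_min_general V r' h
end
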